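/- arXiv:1102.1520 — 14 statements merged into one kernel-verified Lean document; each statement's English description precedes it below -/
import Mathlib

section
/- Let M be a bipotent semiring and E an equivalence relation on M. Then E is both additive and multiplicative (i.e., a semiring congruence, so that the quotient M/E carries a semiring structure making the quotient map a semiring homomorphism) if and only if E is multiplicative and order compatible with respect to the order x ≤ y iff x + y = y. -/
/-!
Write `x ≤ y` for `x + y = y`. An additive equivalence is order compatible: adding `x₁` to
`x₂ ~ x₃` and `x₃` to `x₁ ~ x₄` gives `x₂ = x₂ + x₁ ~ x₁ + x₃ ~ x₄ + x₃ = x₄ ~ x₁`. Conversely, an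
order-compatible equivalence has convex classes, and by bipotence each of `x + z`, `y + z` is `z` or
the other summand; when they differ, `z` lies between `x` and `y`, hence in their common class.
-/

section

variable {M : Type*} {E : M → M → Prop}

def IsOrderCompatible [Add M] (E : M → M → Prop) : Prop :=
  ∀ x1 x2 x3 x4 : M, x1 + x2 = x2 → x3 + x4 = x4 → E x1 x4 → E x2 x3 → E x1 x2

theorem isOrderCompatible_of_add_right [AddCommMagma M] (hE : Equivalence E)
    (hadd : ∀ x y z : M, E x y → E (x + z) (y + z)) : IsOrderCompatible E := by
  intro x1 x2 x3 x4 h12 h34 h14 h23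
  have h2 : E x2 (x1 + x3) := by
    have := hadd _ _ x1 h23
    rwa [add_comm x2, h12, add_comm x3] at this
  have h4 : E (x1 + x3) x4 := by
    have := hadd _ _ x3 h14
    rwa [add_comm x4, h34] at this
  exact hE.symm (hE.trans h2 (hE.trans h4 (hE.symm h14)))

theorem IsOrderCompatible.rel_of_le_of_le [Add M] (hoc : IsOrderCompatible E)
    (hE : Equivalence E) {x y z : M} (hxz : x + z = z) (hzy : z + y = y) (hxy : E x y) :
    E x z :=
  hoc x z z y hxz hzy hxy (hE.refl z)

theorem IsOrderCompatible.add_right [AddCommMagma M] (hoc : IsOrderCompatible E)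
    (hE : Equivalence E) (hbip : ∀ x y : M, x + y = x ∨ x + y = y) :
    ∀ x y z : M, E x y → E (x + z) (y + z) := by
  intro x y z hxy
  rcases hbip x z with hx | hx <;> rcases hbip y z with hy | hy <;> rw [hx, hy]
  · exact hxy
  · have hyz : E y z := hoc.rel_of_le_of_le hE hy (by rwa [add_comm]) (hE.symm hxy)
    exact hE.trans hxy hyz
  · have hxz : E x z := hoc.rel_of_le_of_le hE hx (by rwa [add_comm]) hxy
    exact hE.trans (hE.symm hxz) hxy
  · exact hE.refl z

end

/-- For an equivalence relation `E` on a bipotent semiring `M`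
(ordered by `x ≤ y ↔ x + y = y`), `E` is a semiring congruence
(additive and multiplicative) iff `E` is multiplicative and order compatible. -/
theorem bipotent_congruence_iff {M : Type*} [CommSemiring M]
    (hbip : ∀ x y : M, x + y = x ∨ x + y = y)
    (E : M → M → Prop) (hE : Equivalence E) :
    ((∀ x y z : M, E x y → E (x + z) (y + z)) ∧
        (∀ x y z : M, E x y → E (x * z) (y * z))) ↔
      ((∀ x y z : M, E x y → E (x * z) (y * z)) ∧
        (∀ x1 x2 x3 x4 : M, x1 + x2 = x2 → x3 + x4 = x4 →
          E x1 x4 → E x2 x3 → E x1 x2)) :=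
  ⟨fun ⟨hadd, hmul⟩ => ⟨hmul, isOrderCompatible_of_add_right hE hadd⟩,
    fun ⟨hmul, hoc⟩ => ⟨IsOrderCompatible.add_right hoc hE hbip, hmul⟩⟩
end

section
/- Let M be a linearly ordered set, H a commutative semigroup, and • : H → M → M an action satisfying (g*h)•x = g•(h•x), such that each h ∈ H acts order-preservingly (x ≤ y implies h•x ≤ h•y). Define x ~ y iff there exist g, h ∈ H with g•x = h•y. If for every x ∈ M the orbit H•x := {h•x : h ∈ H} is order-convex in M, then ~ is an equivalence relation on M and is order compatible. -/
/-!
For order compatibility, take `g•x₁ = h•x₄` and `g'•x₂ = h'•x₃`. Acting by `hg'` and using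
monotonicity, `(hg')•x₁ ≤ (hg')•x₂ = (h'h)•x₃ ≤ (h'h)•x₄ = (h'g)•x₁`, so `(hg')•x₂` lies between
two points of the orbit of `x₁`, hence in it by convexity.
-/

section OrbitsMeet

variable {M H : Type*}

def OrbitsMeet (act : H → M → M) (x y : M) : Prop :=
  ∃ g h : H, act g x = act h y

theorem act_act_comm [CommSemigroup H] {act : H → M → M}
    (hact : ∀ (g h : H) (x : M), act (g * h) x = act g (act h x)) (g h : H) (x : M) :
    act g (act h x) = act h (act g x) := by
  rw [← hact, mul_comm, hact]

theorem orbitsMeet_equivalence [CommSemigroup H] [Nonempty H] {act : H → M → M}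
    (hact : ∀ (g h : H) (x : M), act (g * h) x = act g (act h x)) :
    Equivalence (OrbitsMeet act) where
  refl x := let e := Classical.arbitrary H; ⟨e, e, rfl⟩
  symm := fun ⟨g, h, hgh⟩ => ⟨h, g, hgh.symm⟩
  trans := fun {x y z} ⟨g, h, hxy⟩ ⟨g', h', hyz⟩ =>
    ⟨g' * g, h * h', by
      rw [hact, hxy, act_act_comm hact, hyz, ← hact]⟩

theorem orbitsMeet_of_le_of_le [CommSemigroup H] [LinearOrder M] {act : H → M → M}
    (hact : ∀ (g h : H) (x : M), act (g * h) x = act g (act h x))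
    (hmono : ∀ (h : H) (x y : M), x ≤ y → act h x ≤ act h y)
    (hconv : ∀ (x z : M) (h1 h2 : H), act h1 x ≤ z → z ≤ act h2 x → ∃ h3 : H, act h3 x = z)
    {x₁ x₂ x₃ x₄ : M} (h₁₂ : x₁ ≤ x₂) (h₃₄ : x₃ ≤ x₄)
    (h₁₄ : OrbitsMeet act x₁ x₄) (h₂₃ : OrbitsMeet act x₂ x₃) :
    OrbitsMeet act x₁ x₂ := by
  obtain ⟨g, h, hg⟩ := h₁₄
  obtain ⟨g', h', hg'⟩ := h₂₃
  have lower : act (h * g') x₁ ≤ act (h * g') x₂ := hmono _ _ _ h₁₂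
  have upper : act (h * g') x₂ ≤ act (h' * g) x₁ :=
    calc act (h * g') x₂ = act h' (act h x₃) := by rw [hact, hg', act_act_comm hact]
      _ ≤ act h' (act h x₄) := hmono _ _ _ (hmono _ _ _ h₃₄)
      _ = act (h' * g) x₁ := by rw [← hg, hact]
  obtain ⟨k, hk⟩ := hconv x₁ _ _ _ lower upper
  exact ⟨k, h * g', hk⟩

end OrbitsMeet

/-- If a commutative semigroup `H` acts order-preservingly on a
linearly ordered set `M` with all orbits order-convex, then the relation
`x ~ y ↔ ∃ g h, g•x = h•y` is an order compatible equivalence relation. -/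
theorem orbit_equivalence_orderCompatible {M H : Type*} [LinearOrder M]
    [CommSemigroup H] [Nonempty H]
    (act : H → M → M)
    (hact : ∀ (g h : H) (x : M), act (g * h) x = act g (act h x))
    (hmono : ∀ (h : H) (x y : M), x ≤ y → act h x ≤ act h y)
    (hconv : ∀ (x z : M) (h1 h2 : H), act h1 x ≤ z → z ≤ act h2 x →
      ∃ h3 : H, act h3 x = z) :
    Equivalence (fun x y : M => ∃ g h : H, act g x = act h y) ∧
      (∀ x1 x2 x3 x4 : M, x1 ≤ x2 → x3 ≤ x4 →
        (∃ g h : H, act g x1 = act h x4) → (∃ g h : H, act g x2 = act h x3) →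
          (∃ g h : H, act g x1 = act h x2)) :=
  ⟨orbitsMeet_equivalence hact, fun _ _ _ _ h₁₂ h₃₄ =>
    orbitsMeet_of_le_of_le hact hmono hconv h₁₂ h₃₄⟩
end

section
/- Let U be a supertropical commutative semiring and 𝔞 an ideal of U. Then E(𝔞) is additive and multiplicative (a semiring congruence), and the quotient semiring U/E(𝔞) is again supertropical; explicitly, writing x ~ y for x ~E(𝔞) y: (a) for all x, y ∈ U, if e*x ~ e*y then x + y ~ e*x; (b) for all x, y ∈ U, if not e*x ~ e*y, then x + y ~ x or x + y ~ y. -/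
/-- The equivalence relation `E(𝔞)` associated to an ideal (as a set) of a
commutative semiring: `x ~ y` iff `x + a = y + b` for some `a, b ∈ 𝔞`. -/
def STRel {R : Type*} [CommSemiring R] (I : Set R) (x y : R) : Prop :=
  ∃ a ∈ I, ∃ b ∈ I, x + a = y + b

/-- An ideal of a commutative semiring, as a set. -/
def IsSemiringIdeal {R : Type*} [CommSemiring R] (I : Set R) : Prop :=
  (0 : R) ∈ I ∧ (∀ x ∈ I, ∀ y ∈ I, x + y ∈ I) ∧ (∀ r : R, ∀ x ∈ I, r * x ∈ I)

/-!
If `e x ≠ e y` and `x + y = x`, then also `x + e y = x`: otherwise `x + e y = e y`, and applying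
`e` to both absorptions gives `e x = e x + e y = e y`. Hence a relation `e x + a = e y + b` can be
added to `x = x + e y` and absorbed by `x + e x = e x`, which yields `x ~ e x`; when instead
`x + y = y`, the same argument gives `y ~ e y ~ e x`. This proves (a); (b) is immediate since
`e x ≠ e y` whenever `e x ≁ e y`.
-/

namespace STRel

variable {R : Type*} [CommSemiring R] {I : Set R}

theorem of_eq (h0 : (0 : R) ∈ I) {x y : R} (h : x = y) : STRel I x y :=
  ⟨0, h0, 0, h0, by rw [h]⟩

theorem symm {x y : R} : STRel I x y → STRel I y x
  | ⟨a, ha, b, hb, h⟩ => ⟨b, hb, a, ha, h.symm⟩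

theorem trans (hadd : ∀ x ∈ I, ∀ y ∈ I, x + y ∈ I) {x y z : R} :
    STRel I x y → STRel I y z → STRel I x z
  | ⟨a, ha, b, hb, hab⟩, ⟨c, hc, d, hd, hcd⟩ =>
    ⟨a + c, hadd a ha c hc, d + b, hadd d hd b hb, by
      rw [← add_assoc, hab, add_right_comm, hcd, add_assoc]⟩

theorem equivalence (hI : IsSemiringIdeal I) : Equivalence (STRel I) :=
  ⟨fun _ => of_eq hI.1 rfl, symm, trans hI.2.1⟩

theorem add_right {x y : R} (z : R) : STRel I x y → STRel I (x + z) (y + z)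
  | ⟨a, ha, b, hb, h⟩ => ⟨a, ha, b, hb, by rw [add_right_comm, h, add_right_comm]⟩

theorem mul_right (hmul : ∀ r : R, ∀ x ∈ I, r * x ∈ I) {x y : R} (z : R) :
    STRel I x y → STRel I (x * z) (y * z)
  | ⟨a, ha, b, hb, h⟩ => ⟨z * a, hmul z a ha, z * b, hmul z b hb, by
      rw [mul_comm x, mul_comm y, ← mul_add, ← mul_add, h]⟩

end STRel

structure IsSupertropical (U : Type*) [CommSemiring U] : Prop where
  ghost_idem : (1 + 1 : U) * (1 + 1) = 1 + 1
  add_of_ghost_eq : ∀ x y : U, (1 + 1) * x = (1 + 1) * y → x + y = (1 + 1) * x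
  add_of_ghost_ne : ∀ x y : U, (1 + 1) * x ≠ (1 + 1) * y → x + y = x ∨ x + y = y

namespace IsSupertropical

variable {U : Type*} [CommSemiring U] (hU : IsSupertropical U)
include hU

theorem ghost_ghost (x : U) : (1 + 1) * ((1 + 1) * x) = (1 + 1) * x := by
  rw [← mul_assoc, hU.ghost_idem]

theorem add_ghost_self (x : U) : x + (1 + 1) * x = (1 + 1) * x :=
  hU.add_of_ghost_eq x _ (hU.ghost_ghost x).symm

theorem add_ghost_eq_left {x y : U} (hne : (1 + 1) * x ≠ (1 + 1) * y) (h : x + y = x) :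
    x + (1 + 1) * y = x := by
  have hne' : (1 + 1) * x ≠ (1 + 1) * ((1 + 1) * y) := by rwa [hU.ghost_ghost]
  refine (hU.add_of_ghost_ne x _ hne').resolve_right fun h' => hne ?_
  calc (1 + 1) * x = (1 + 1) * (x + y) := by rw [h]
    _ = (1 + 1) * (x + (1 + 1) * y) := by rw [mul_add, mul_add, hU.ghost_ghost]
    _ = (1 + 1) * y := by rw [h', hU.ghost_ghost]

theorem strel_ghost_of_add_ghost_eq {I : Set U} {x y : U} (h : x + (1 + 1) * y = x)
    (hxy : STRel I ((1 + 1) * x) ((1 + 1) * y)) : STRel I x ((1 + 1) * x) := by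
  obtain ⟨a, ha, b, hb, hab⟩ := hxy
  refine ⟨b, hb, a, ha, ?_⟩
  calc x + b = x + ((1 + 1) * y + b) := by rw [← add_assoc, h]
    _ = (1 + 1) * x + a := by rw [← hab, ← add_assoc, hU.add_ghost_self]

theorem strel_add_of_strel_ghost {I : Set U} (hI : IsSemiringIdeal I) {x y : U}
    (hxy : STRel I ((1 + 1) * x) ((1 + 1) * y)) : STRel I (x + y) ((1 + 1) * x) := by
  by_cases heq : (1 + 1) * x = (1 + 1) * y
  · exact STRel.of_eq hI.1 (hU.add_of_ghost_eq x y heq)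
  rcases hU.add_of_ghost_ne x y heq with hx | hy
  · rw [hx]
    exact hU.strel_ghost_of_add_ghost_eq (hU.add_ghost_eq_left heq hx) hxy
  · rw [hy]
    have hy' : y + (1 + 1) * x = y :=
      hU.add_ghost_eq_left (Ne.symm heq) (by rw [add_comm, hy])
    exact (hU.strel_ghost_of_add_ghost_eq hy' hxy.symm).trans hI.2.1 hxy.symm

theorem strel_add_of_not_strel_ghost {I : Set U} (h0 : (0 : U) ∈ I) {x y : U}
    (hxy : ¬ STRel I ((1 + 1) * x) ((1 + 1) * y)) : STRel I (x + y) x ∨ STRel I (x + y) y :=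
  (hU.add_of_ghost_ne x y fun heq => hxy (STRel.of_eq h0 heq)).imp
    (STRel.of_eq h0) (STRel.of_eq h0)

end IsSupertropical

/-- For an ideal `𝔞` of a supertropical semiring `U`, the relation
`E(𝔞)` is a semiring congruence and the quotient `U/E(𝔞)` is supertropical. -/
theorem ideal_rel_congruence_quotient_supertropical {U : Type*} [CommSemiring U]
    (hST1 : (1 + 1 : U) * (1 + 1) = 1 + 1)
    (hST2 : ∀ x y : U, (1 + 1) * x = (1 + 1) * y → x + y = (1 + 1) * x)
    (hST3 : ∀ x y : U, (1 + 1) * x ≠ (1 + 1) * y → x + y = x ∨ x + y = y)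
    (I : Set U) (hI : IsSemiringIdeal I) :
    Equivalence (STRel I) ∧
    -- E(𝔞) is additive and multiplicative
    (∀ x y z : U, STRel I x y → STRel I (x + z) (y + z)) ∧
    (∀ x y z : U, STRel I x y → STRel I (x * z) (y * z)) ∧
    -- (a) the analogue of ST2 in the quotient
    (∀ x y : U, STRel I ((1 + 1) * x) ((1 + 1) * y) →
      STRel I (x + y) ((1 + 1) * x)) ∧
    -- (b) the analogue of ST3 in the quotient
    (∀ x y : U, ¬ STRel I ((1 + 1) * x) ((1 + 1) * y) →
      STRel I (x + y) x ∨ STRel I (x + y) y) := by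
  have hU : IsSupertropical U := ⟨hST1, hST2, hST3⟩
  exact ⟨STRel.equivalence hI, fun _ _ z => STRel.add_right z,
    fun _ _ z => STRel.mul_right hI.2.2 z, fun _ _ => hU.strel_add_of_strel_ghost hI,
    fun _ _ => hU.strel_add_of_not_strel_ghost hI.1⟩
end

section
/- Let U and V be commutative semirings and f : U → V a surjective semiring homomorphism. If U is supertropical, then V is supertropical (every homomorphic image of a supertropical semiring is again supertropical). -/
/-!
Lift elements of `V` along `f`. (ST1) and (ST3) transfer directly, since `e * f a ≠ e * f b`
forces `e * a ≠ e * b`. For (ST2) the only new case is `e * a ≠ e * b` in `U` while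
`e * f a = e * f b` in `V`. There (ST3) in `U` still gives, say, `f a + f b = f a`, and then
`f a = f a + f b + f b = f a + e * f a = (1 + e) * f a = e * f a`, because `1 + e = e` holds in
every supertropical semiring (apply (ST2) to `1` and `e`).
-/

structure IsSupertropical_s6 (R : Type*) [CommSemiring R] : Prop where
  mul_self : (1 + 1 : R) * (1 + 1) = 1 + 1
  add_of_mul_eq : ∀ x y : R, (1 + 1) * x = (1 + 1) * y → x + y = (1 + 1) * x
  add_of_mul_ne : ∀ x y : R, (1 + 1) * x ≠ (1 + 1) * y → x + y = x ∨ x + y = y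

theorem IsSupertropical_s6.one_add_two_eq_two {R : Type*} [CommSemiring R] (h : IsSupertropical_s6 R) :
    (1 : R) + (1 + 1) = 1 + 1 := by
  simpa using h.add_of_mul_eq 1 (1 + 1) (by rw [mul_one, h.mul_self])

section Semiring

variable {R : Type*} [Semiring R]

theorem add_eq_two_mul_of_add_eq_left (h3 : (1 : R) + (1 + 1) = 1 + 1) {x y : R}
    (hxy : x + y = x) (he : (1 + 1) * x = (1 + 1) * y) : x + y = (1 + 1) * x := by
  calc x + y = x + (1 + 1) * y := by rw [add_one_mul, one_mul, ← add_assoc, hxy, hxy]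
    _ = (1 + (1 + 1)) * x := by rw [← he, add_mul 1 (1 + 1) x, one_mul]
    _ = (1 + 1) * x := by rw [h3]

theorem add_eq_two_mul_of_add_eq_right (h3 : (1 : R) + (1 + 1) = 1 + 1) {x y : R}
    (hxy : x + y = y) (he : (1 + 1) * x = (1 + 1) * y) : x + y = (1 + 1) * x := by
  rw [add_comm, he]
  exact add_eq_two_mul_of_add_eq_left h3 (by rwa [add_comm]) he.symm

end Semiring

theorem IsSupertropical_s6.of_surjective {U V : Type*} [CommSemiring U] [CommSemiring V]
    (f : U →+* V) (hf : Function.Surjective f) (hU : IsSupertropical_s6 U) :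
    IsSupertropical_s6 V where
  mul_self := by simpa using congrArg f hU.mul_self
  add_of_mul_eq := hf.forall₂.2 fun a b h => by
    by_cases hab : (1 + 1 : U) * a = (1 + 1) * b
    · simpa using congrArg f (hU.add_of_mul_eq a b hab)
    have h3 : (1 : V) + (1 + 1) = 1 + 1 := by simpa using congrArg f hU.one_add_two_eq_two
    rcases hU.add_of_mul_ne a b hab with hab' | hab'
    · exact add_eq_two_mul_of_add_eq_left h3 (by simpa using congrArg f hab') h
    · exact add_eq_two_mul_of_add_eq_right h3 (by simpa using congrArg f hab') h
  add_of_mul_ne := hf.forall₂.2 fun a b h => by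
    have hab : (1 + 1 : U) * a ≠ (1 + 1) * b := fun hab => h (by simpa using congrArg f hab)
    exact (hU.add_of_mul_ne a b hab).imp (fun h => by simpa using congrArg f h)
      (fun h => by simpa using congrArg f h)

/-- Every surjective homomorphic image of a supertropical
commutative semiring is again supertropical. -/
theorem surjective_image_supertropical {U V : Type*} [CommSemiring U]
    [CommSemiring V] (f : U →+* V) (hf : Function.Surjective f)
    (hST1 : (1 + 1 : U) * (1 + 1) = 1 + 1)
    (hST2 : ∀ x y : U, (1 + 1) * x = (1 + 1) * y → x + y = (1 + 1) * x)
    (hST3 : ∀ x y : U, (1 + 1) * x ≠ (1 + 1) * y → x + y = x ∨ x + y = y) :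
    ((1 + 1 : V) * (1 + 1) = 1 + 1) ∧
    (∀ x y : V, (1 + 1) * x = (1 + 1) * y → x + y = (1 + 1) * x) ∧
    (∀ x y : V, (1 + 1) * x ≠ (1 + 1) * y → x + y = x ∨ x + y = y) :=
  let hV := IsSupertropical_s6.of_surjective f hf ⟨hST1, hST2, hST3⟩
  ⟨hV.mul_self, hV.add_of_mul_eq, hV.add_of_mul_ne⟩
end

section
/- Let R be a commutative semiring and 𝔞, 𝔟 ideals of R. Then sat(𝔞) is an ideal of R, and: (i) E(𝔞) = E(sat(𝔞)) (the two relations relate exactly the same pairs); (ii) E(𝔞) is contained in E(𝔟) if and only if sat(𝔞) ⊆ sat(𝔟); (iii) sat(𝔞) is the largest ideal 𝔞' of R with E(𝔞') = E(𝔞): E(sat(𝔞)) = E(𝔞), and every ideal 𝔞' of R with E(𝔞') = E(𝔞) satisfies 𝔞' ⊆ sat(𝔞). -/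
/-- The saturum of an ideal `𝔞`: all `x` with `x + a ∈ 𝔞` for some `a ∈ 𝔞`. -/
def STSat {R : Type*} [CommSemiring R] (I : Set R) : Set R :=
  {x : R | ∃ a ∈ I, x + a ∈ I}

section

variable {R : Type*} [CommSemiring R] {I J : Set R}

lemma subset_STSat (h0 : (0 : R) ∈ I) : I ⊆ STSat I :=
  fun x hx => ⟨0, h0, by rwa [add_zero]⟩

lemma mem_STSat_iff_STRel_zero {x : R} : x ∈ STSat I ↔ STRel I x 0 := by
  constructor
  · rintro ⟨a, ha, hxa⟩
    exact ⟨a, ha, x + a, hxa, (zero_add _).symm⟩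
  · rintro ⟨a, ha, b, hb, h⟩
    exact ⟨a, ha, by rwa [h, zero_add]⟩

lemma STRel.mono (hIJ : I ⊆ J) {x y : R} : STRel I x y → STRel J x y :=
  fun ⟨a, ha, b, hb, h⟩ => ⟨a, hIJ ha, b, hIJ hb, h⟩

lemma STRel.of_STSat (hadd : ∀ x ∈ I, ∀ y ∈ I, x + y ∈ I) {x y : R} :
    STRel (STSat I) x y → STRel I x y := by
  rintro ⟨a, ⟨a', ha', haa'⟩, b, ⟨b', hb', hbb'⟩, h⟩
  refine ⟨a + a' + b', hadd _ haa' _ hb', b + b' + a', hadd _ hbb' _ ha', ?_⟩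
  calc x + (a + a' + b') = (x + a) + (a' + b') := by ring
    _ = (y + b) + (a' + b') := by rw [h]
    _ = y + (b + b' + a') := by ring

lemma STRel_STSat_iff (hI : IsSemiringIdeal I) {x y : R} :
    STRel (STSat I) x y ↔ STRel I x y :=
  ⟨STRel.of_STSat hI.2.1, STRel.mono (subset_STSat hI.1)⟩

lemma isSemiringIdeal_STSat (hI : IsSemiringIdeal I) : IsSemiringIdeal (STSat I) := by
  obtain ⟨h0, hadd, hmul⟩ := hI
  refine ⟨subset_STSat h0 h0, ?_, ?_⟩
  · rintro x ⟨a, ha, hxa⟩ y ⟨b, hb, hyb⟩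
    exact ⟨a + b, hadd _ ha _ hb, by rw [add_add_add_comm]; exact hadd _ hxa _ hyb⟩
  · rintro r x ⟨a, ha, hxa⟩
    exact ⟨r * a, hmul _ _ ha, by rw [← mul_add]; exact hmul _ _ hxa⟩

lemma STSat_subset_of_STRel_imp (h : ∀ x y : R, STRel I x y → STRel J x y) :
    STSat I ⊆ STSat J :=
  fun x hx => mem_STSat_iff_STRel_zero.mpr (h x 0 (mem_STSat_iff_STRel_zero.mp hx))

lemma STRel_imp_of_STSat_subset (hI : IsSemiringIdeal I) (hJ : IsSemiringIdeal J)
    (h : STSat I ⊆ STSat J) {x y : R} (hxy : STRel I x y) : STRel J x y :=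
  (STRel_STSat_iff hJ).mp (((STRel_STSat_iff hI).mpr hxy).mono h)

lemma subset_STSat_of_STRel_imp {K : Set R} (hK : (0 : R) ∈ K)
    (h : ∀ x y : R, STRel K x y → STRel I x y) : K ⊆ STSat I :=
  (subset_STSat hK).trans (STSat_subset_of_STRel_imp h)

end

/-- `sat(𝔞)` is an ideal; `E(𝔞) = E(sat 𝔞)`; `E(𝔞) ⊆ E(𝔟)` iff
`sat 𝔞 ⊆ sat 𝔟`; and `sat 𝔞` is the largest ideal `𝔞'` with `E(𝔞') = E(𝔞)`. -/
theorem saturum_and_ideal_relations {R : Type*} [CommSemiring R]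
    (I J : Set R) (hI : IsSemiringIdeal I) (hJ : IsSemiringIdeal J) :
    IsSemiringIdeal (STSat I) ∧
    -- (i)
    (∀ x y : R, STRel I x y ↔ STRel (STSat I) x y) ∧
    -- (ii)
    ((∀ x y : R, STRel I x y → STRel J x y) ↔ STSat I ⊆ STSat J) ∧
    -- (iii)
    ((∀ x y : R, STRel (STSat I) x y ↔ STRel I x y) ∧
      (∀ K : Set R, IsSemiringIdeal K →
        (∀ x y : R, STRel K x y ↔ STRel I x y) → K ⊆ STSat I)) :=
  ⟨isSemiringIdeal_STSat hI,
    fun _ _ => (STRel_STSat_iff hI).symm,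
    ⟨STSat_subset_of_STRel_imp, fun h _ _ => STRel_imp_of_STSat_subset hI hJ h⟩,
    fun _ _ => STRel_STSat_iff hI,
    fun _ hK hKI => subset_STSat_of_STRel_imp hK.1 fun x y => (hKI x y).mp⟩
end

section
/- Let U be a supertropical semiring and 𝔞, 𝔟 ideals of U. Then E(𝔞) is contained in E(𝔟) or E(𝔟) is contained in E(𝔞) (i.e., x ~E(𝔞) y implies x ~E(𝔟) y for all x, y, or x ~E(𝔟) y implies x ~E(𝔞) y for all x, y). -/
structure IsSupertropical_s9 (U : Type*) [CommSemiring U] : Prop where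
  two_mul_two : (1 + 1 : U) * (1 + 1) = 1 + 1
  add_of_two_mul_eq : ∀ x y : U, (1 + 1) * x = (1 + 1) * y → x + y = (1 + 1) * x
  add_of_two_mul_ne : ∀ x y : U, (1 + 1) * x ≠ (1 + 1) * y → x + y = x ∨ x + y = y

theorem add_eq_right_trans {M : Type*} [AddCommSemigroup M] {x p q : M}
    (hxp : x + p = p) (hpq : p + q = q) : x + q = q :=
  calc x + q = (x + p) + q := by rw [add_assoc, hpq]
    _ = q := by rw [hxp, hpq]

namespace IsSupertropical_s9

variable {U : Type*} [CommSemiring U] (hU : IsSupertropical_s9 U)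
include hU

theorem two_mul_two_mul (c : U) : (1 + 1) * ((1 + 1) * c) = (1 + 1) * c := by
  rw [← mul_assoc, hU.two_mul_two]

theorem add_two_mul_self (a : U) : a + (1 + 1) * a = (1 + 1) * a :=
  hU.add_of_two_mul_eq a _ (hU.two_mul_two_mul a).symm

theorem add_two_mul_eq_left_or_eq_right (u c : U) :
    u + (1 + 1) * c = u ∨ u + (1 + 1) * c = (1 + 1) * c := by
  by_cases h : (1 + 1) * u = (1 + 1) * ((1 + 1) * c)
  · exact Or.inr ((hU.add_of_two_mul_eq u _ h).trans (h.trans (hU.two_mul_two_mul c)))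
  · exact hU.add_of_two_mul_ne u _ h

theorem ghost_add_eq_right_or (c d : U) :
    (1 + 1) * c + (1 + 1) * d = (1 + 1) * d ∨ (1 + 1) * d + (1 + 1) * c = (1 + 1) * c := by
  rw [add_comm ((1 + 1) * d)]
  exact (hU.add_two_mul_eq_left_or_eq_right ((1 + 1) * c) d).symm

theorem strel_iff {K : Set U} (hK : IsSemiringIdeal K) {x y : U} :
    STRel K x y ↔
      x = y ∨ ∃ c ∈ K, x + (1 + 1) * c = (1 + 1) * c ∧ y + (1 + 1) * c = (1 + 1) * c := by
  constructor
  · rintro ⟨a, ha, b, hb, hab⟩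
    -- adding the ghost `e * (a + b)` swallows both `a` and `b`
    have key : x + (1 + 1) * (a + b) = y + (1 + 1) * (a + b) :=
      calc x + (1 + 1) * (a + b) = (x + a) + ((1 + 1) * a + (1 + 1) * b) := by
            rw [add_assoc x a, ← add_assoc a, hU.add_two_mul_self, mul_add]
        _ = (y + b) + ((1 + 1) * a + (1 + 1) * b) := by rw [hab]
        _ = y + ((1 + 1) * a + (b + (1 + 1) * b)) := by ring
        _ = y + (1 + 1) * (a + b) := by rw [hU.add_two_mul_self, mul_add]
    have hab_mem : a + b ∈ K := hK.2.1 a ha b hb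
    rcases hU.add_two_mul_eq_left_or_eq_right x (a + b) with hx | hx
    · rcases hU.add_two_mul_eq_left_or_eq_right y (a + b) with hy | hy
      · exact Or.inl (hx.symm.trans (key.trans hy))
      · exact Or.inr ⟨a + b, hab_mem, key.trans hy, hy⟩
    · exact Or.inr ⟨a + b, hab_mem, hx, key.symm.trans hx⟩
  · rintro (rfl | ⟨c, hc, hx, hy⟩)
    · exact ⟨0, hK.1, 0, hK.1, rfl⟩
    · have hec : (1 + 1) * c ∈ K := hK.2.2 _ c hc
      exact ⟨_, hec, _, hec, hx.trans hy.symm⟩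

theorem strel_mono {I J : Set U} (hI : IsSemiringIdeal I) (hJ : IsSemiringIdeal J)
    (hIJ : ∀ c ∈ I, ∃ d ∈ J, (1 + 1) * c + (1 + 1) * d = (1 + 1) * d) {x y : U}
    (hxy : STRel I x y) : STRel J x y := by
  rw [hU.strel_iff hJ]
  rcases (hU.strel_iff hI).1 hxy with rfl | ⟨c, hc, hx, hy⟩
  · exact Or.inl rfl
  · obtain ⟨d, hd, hcd⟩ := hIJ c hc
    exact Or.inr ⟨d, hd, add_eq_right_trans hx hcd, add_eq_right_trans hy hcd⟩

end IsSupertropical_s9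

/-- For any two ideals `𝔞, 𝔟` of a supertropical semiring,
`E(𝔞) ⊆ E(𝔟)` or `E(𝔟) ⊆ E(𝔞)`. -/
theorem ideal_rels_form_chain {U : Type*} [CommSemiring U]
    (hST1 : (1 + 1 : U) * (1 + 1) = 1 + 1)
    (hST2 : ∀ x y : U, (1 + 1) * x = (1 + 1) * y → x + y = (1 + 1) * x)
    (hST3 : ∀ x y : U, (1 + 1) * x ≠ (1 + 1) * y → x + y = x ∨ x + y = y)
    (I J : Set U) (hI : IsSemiringIdeal I) (hJ : IsSemiringIdeal J) :
    (∀ x y : U, STRel I x y → STRel J x y) ∨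
      (∀ x y : U, STRel J x y → STRel I x y) := by
  have hU : IsSupertropical_s9 U := ⟨hST1, hST2, hST3⟩
  by_cases hIJ : ∀ c ∈ I, ∃ d ∈ J, (1 + 1) * c + (1 + 1) * d = (1 + 1) * d
  · exact Or.inl fun x y => hU.strel_mono hI hJ hIJ
  · push Not at hIJ
    obtain ⟨c, hc, hcJ⟩ := hIJ
    refine Or.inr fun x y => hU.strel_mono hJ hI fun d hd => ⟨c, hc, ?_⟩
    exact (hU.ghost_add_eq_right_or c d).resolve_left (hcJ d hd)
end

section
/- Let U be a supertropical semiring with ghost ideal M and 𝔞 an ideal of U with e ∉ 𝔞. Then 𝔞 is a prime ideal of U (𝔞 ≠ U, and x*y ∈ 𝔞 implies x ∈ 𝔞 or y ∈ 𝔞) if and only if both: (a) for all a, b ∈ M, a*b ∈ 𝔞 implies a ∈ 𝔞 or b ∈ 𝔞; and (b) every x ∈ U with e*x ∈ 𝔞 satisfies x ∈ 𝔞. -/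
theorem IsSemiringIdeal.mul_mem_left {R : Type*} [CommSemiring R] {I : Set R}
    (hI : IsSemiringIdeal I) (r : R) {x : R} (hx : x ∈ I) : r * x ∈ I :=
  hI.2.2 r x hx

theorem IsSemiringIdeal.mem_or_mem_of_ghost_prime {R : Type*} [CommSemiring R] {I : Set R}
    (hI : IsSemiringIdeal I) {e : R} (he : IsIdempotentElem e)
    (hghost : ∀ a b : R, e * a = a → e * b = b → a * b ∈ I → a ∈ I ∨ b ∈ I)
    (hcancel : ∀ x : R, e * x ∈ I → x ∈ I) {x y : R} (hxy : x * y ∈ I) :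
    x ∈ I ∨ y ∈ I := by
  have hghost_mul : (e * x) * (e * y) ∈ I := by
    rw [mul_mul_mul_comm, he.eq]
    exact hI.mul_mem_left e hxy
  exact (hghost _ _ (he.mul_self_mul x) (he.mul_self_mul y) hghost_mul).imp (hcancel x) (hcancel y)

theorem prime_ideal_iff_ghost_prime_general {U : Type*} [CommSemiring U]
    (hST1 : (1 + 1 : U) * (1 + 1) = 1 + 1)
    (I : Set U) (hI : IsSemiringIdeal I) (he : (1 + 1 : U) ∉ I) :
    (I ≠ Set.univ ∧ ∀ x y : U, x * y ∈ I → x ∈ I ∨ y ∈ I) ↔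
      ((∀ a b : U, (1 + 1) * a = a → (1 + 1) * b = b →
          a * b ∈ I → a ∈ I ∨ b ∈ I) ∧
        (∀ x : U, (1 + 1) * x ∈ I → x ∈ I)) := by
  constructor
  · rintro ⟨-, hprime⟩
    exact ⟨fun a b _ _ => hprime a b, fun x hx => (hprime _ x hx).resolve_left he⟩
  · rintro ⟨hghost, hcancel⟩
    exact ⟨fun h => he (h ▸ Set.mem_univ _),
      fun x y => hI.mem_or_mem_of_ghost_prime hST1 hghost hcancel⟩

/-- An ideal `𝔞` of a supertropical semiring `U` with `e ∉ 𝔞`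
is prime iff (a) `𝔞 ∩ M` is prime in the ghost ideal `M` and (b) every `x`
with `e*x ∈ 𝔞` lies in `𝔞`. -/
theorem prime_ideal_iff_ghost_prime {U : Type*} [CommSemiring U]
    (hST1 : (1 + 1 : U) * (1 + 1) = 1 + 1)
    (hST2 : ∀ x y : U, (1 + 1) * x = (1 + 1) * y → x + y = (1 + 1) * x)
    (hST3 : ∀ x y : U, (1 + 1) * x ≠ (1 + 1) * y → x + y = x ∨ x + y = y)
    (I : Set U) (hI : IsSemiringIdeal I) (he : (1 + 1 : U) ∉ I) :
    (I ≠ Set.univ ∧ ∀ x y : U, x * y ∈ I → x ∈ I ∨ y ∈ I) ↔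
      ((∀ a b : U, (1 + 1) * a = a → (1 + 1) * b = b →
          a * b ∈ I → a ∈ I ∨ b ∈ I) ∧
        (∀ x : U, (1 + 1) * x ∈ I → x ∈ I)) :=
  prime_ideal_iff_ghost_prime_general hST1 I hI he
end

section
/- Let U be a supertropical semiring and 𝔞 a saturated ideal of U with 𝔞 ≠ U. Then 𝔟 := {x ∈ U : there exists n ≥ 1 with e*x^n ∈ 𝔞} is a prime ideal of U; it equals the radical √𝔞 = {x ∈ U : there exists n ≥ 1 with x^n ∈ 𝔞}; it contains 𝔞; and it is the smallest prime ideal of U containing 𝔞, i.e., every prime ideal of U containing 𝔞 contains 𝔟. -/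
/-- For a saturated ideal `𝔞 ≠ U` of a supertropical semiring,
`𝔟 = {x | ∃ n ≥ 1, e*xⁿ ∈ 𝔞}` is a prime ideal, equals the radical `√𝔞`,
contains `𝔞`, and is the smallest prime ideal containing `𝔞`. -/
theorem saturated_ideal_radical_prime {U : Type*} [CommSemiring U]
    (hST1 : (1 + 1 : U) * (1 + 1) = 1 + 1)
    (hST2 : ∀ x y : U, (1 + 1) * x = (1 + 1) * y → x + y = (1 + 1) * x)
    (hST3 : ∀ x y : U, (1 + 1) * x ≠ (1 + 1) * y → x + y = x ∨ x + y = y)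
    (I : Set U) (hI : IsSemiringIdeal I) (hsat : STSat I = I)
    (hne : I ≠ Set.univ)
    (B : Set U) (hB : B = {x : U | ∃ n : ℕ, 1 ≤ n ∧ (1 + 1) * x ^ n ∈ I}) :
    -- B is a prime ideal of U
    IsSemiringIdeal B ∧ B ≠ Set.univ ∧
    (∀ x y : U, x * y ∈ B → x ∈ B ∨ y ∈ B) ∧
    -- B is the radical of 𝔞
    B = {x : U | ∃ n : ℕ, 1 ≤ n ∧ x ^ n ∈ I} ∧
    -- B contains 𝔞 and is the smallest prime ideal containing 𝔞
    I ⊆ B ∧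
    (∀ P : Set U, IsSemiringIdeal P → P ≠ Set.univ →
      (∀ x y : U, x * y ∈ P → x ∈ P ∨ y ∈ P) → I ⊆ P → B ⊆ P) := by
  obtain ⟨h0, hadd, hmul⟩ := hI
  -- basic supertropical facts
  have h1e : (1 : U) + (1 + 1) = (1 + 1) := by
    have h := hST2 1 (1 + 1) (by rw [mul_one, hST1])
    rwa [mul_one] at h
  have hee : ((1 : U) + 1) + (1 + 1) = (1 + 1) := by
    calc ((1 : U) + 1) + (1 + 1) = (1 + 1) * (1 + 1) := by ring
      _ = 1 + 1 := hST1
  have hrefl : ∀ a : U, (1 + 1) * a + (1 + 1) * a = (1 + 1) * a := by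
    intro a
    calc (1 + 1) * a + (1 + 1) * a = (((1 : U) + 1) + (1 + 1)) * a := by ring
      _ = (1 + 1) * a := by rw [hee]
  have htot : ∀ a b : U, (1 + 1) * a + (1 + 1) * b = (1 + 1) * b ∨
      (1 + 1) * a + (1 + 1) * b = (1 + 1) * a := by
    intro a b
    by_cases h : (1 + 1) * ((1 + 1) * a) = (1 + 1) * ((1 + 1) * b)
    · left
      have h' : (1 + 1) * a = (1 + 1) * b := by
        calc (1 + 1) * a = (1 + 1) * ((1 + 1) * a) := by rw [← mul_assoc, hST1]
          _ = (1 + 1) * ((1 + 1) * b) := h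
          _ = (1 + 1) * b := by rw [← mul_assoc, hST1]
      rw [h']; exact hrefl b
    · rcases hST3 _ _ h with h' | h'
      · right; exact h'
      · left; exact h'
  have hle_mul : ∀ a b c d : U, (1 + 1) * a + (1 + 1) * b = (1 + 1) * b →
      (1 + 1) * c + (1 + 1) * d = (1 + 1) * d →
      (1 + 1) * (a * c) + (1 + 1) * (b * d) = (1 + 1) * (b * d) := by
    intro a b c d hab hcd
    have h1 : (1 + 1) * (a * c) + (1 + 1) * (b * c) = (1 + 1) * (b * c) := by
      calc (1 + 1) * (a * c) + (1 + 1) * (b * c) = ((1 + 1) * a + (1 + 1) * b) * c := by ring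
        _ = ((1 + 1) * b) * c := by rw [hab]
        _ = (1 + 1) * (b * c) := by ring
    have h2 : (1 + 1) * (b * c) + (1 + 1) * (b * d) = (1 + 1) * (b * d) := by
      calc (1 + 1) * (b * c) + (1 + 1) * (b * d) = ((1 + 1) * c + (1 + 1) * d) * b := by ring
        _ = ((1 + 1) * d) * b := by rw [hcd]
        _ = (1 + 1) * (b * d) := by ring
    calc (1 + 1) * (a * c) + (1 + 1) * (b * d)
        = (1 + 1) * (a * c) + ((1 + 1) * (b * c) + (1 + 1) * (b * d)) := by rw [h2]
      _ = ((1 + 1) * (a * c) + (1 + 1) * (b * c)) + (1 + 1) * (b * d) := by ring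
      _ = (1 + 1) * (b * c) + (1 + 1) * (b * d) := by rw [h1]
      _ = (1 + 1) * (b * d) := h2
  have hle_pow : ∀ a b : U, (1 + 1) * a + (1 + 1) * b = (1 + 1) * b →
      ∀ n : ℕ, (1 + 1) * a ^ n + (1 + 1) * b ^ n = (1 + 1) * b ^ n := by
    intro a b hab n
    induction n with
    | zero => simpa using hrefl 1
    | succ n ih =>
      rw [pow_succ, pow_succ]
      exact hle_mul _ _ _ _ ih hab
  -- saturation
  have hsatmem : ∀ z : U, (∃ a ∈ I, z + a ∈ I) → z ∈ I := by
    intro z hz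
    rw [← hsat]; exact hz
  have hdown : ∀ z : U, (1 + 1) * z ∈ I → z ∈ I := by
    intro z hz
    apply hsatmem
    refine ⟨(1 + 1) * z, hz, ?_⟩
    have h : z + (1 + 1) * z = (1 + 1) * z := by
      calc z + (1 + 1) * z = (1 + (1 + 1)) * z := by ring
        _ = (1 + 1) * z := by rw [h1e]
    rwa [h]
  have hrad : ∀ x : U, (∃ n : ℕ, 1 ≤ n ∧ (1 + 1) * x ^ n ∈ I) ↔
      (∃ n : ℕ, 1 ≤ n ∧ x ^ n ∈ I) := by
    intro x
    constructor
    · rintro ⟨n, hn, h⟩; exact ⟨n, hn, hdown _ h⟩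
    · rintro ⟨n, hn, h⟩; exact ⟨n, hn, hmul _ _ h⟩
  have hBR : B = {x : U | ∃ n : ℕ, 1 ≤ n ∧ x ^ n ∈ I} := by
    rw [hB]; ext x; exact hrad x
  have hsum : ∀ (s : Finset ℕ) (f : ℕ → U), (∀ i ∈ s, f i ∈ I) → ∑ i ∈ s, f i ∈ I := by
    intro s f hf
    exact Finset.sum_induction f (· ∈ I) (fun a b ha hb => hadd a ha b hb) h0 hf
  -- B is an ideal
  have hideal : IsSemiringIdeal B := by
    rw [hBR]
    refine ⟨⟨1, le_refl 1, by simpa using h0⟩, ?_, ?_⟩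
    · rintro x ⟨m, hm, hx⟩ y ⟨n, hn, hy⟩
      refine ⟨m + n, by omega, ?_⟩
      rw [add_pow]
      apply hsum
      intro k hk
      rcases le_or_gt m k with h | h
      · obtain ⟨d, rfl⟩ : ∃ d, k = m + d := ⟨k - m, by omega⟩
        have heq : x ^ (m + d) * y ^ (m + n - (m + d)) * ((m + n).choose (m + d) : U)
            = (x ^ d * y ^ (m + n - (m + d)) * ((m + n).choose (m + d) : U)) * x ^ m := by
          rw [pow_add]; ring
        rw [heq]; exact hmul _ _ hx
      · obtain ⟨d, hd⟩ : ∃ d, m + n - k = n + d := ⟨m - k, by omega⟩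
        have heq : x ^ k * y ^ (m + n - k) * ((m + n).choose k : U)
            = (x ^ k * y ^ d * ((m + n).choose k : U)) * y ^ n := by
          rw [hd, pow_add]; ring
        rw [heq]; exact hmul _ _ hy
    · rintro r x ⟨n, hn, hx⟩
      exact ⟨n, hn, by rw [mul_pow]; exact hmul _ _ hx⟩
  -- B ≠ univ
  have hBne : B ≠ Set.univ := by
    rw [hBR]
    intro hc
    apply hne
    have h1 : (1 : U) ∈ I := by
      have hm : (1 : U) ∈ {x : U | ∃ n : ℕ, 1 ≤ n ∧ x ^ n ∈ I} := by
        rw [hc]; exact Set.mem_univ 1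
      obtain ⟨n, hn, h⟩ := hm
      rwa [one_pow] at h
    ext x
    simp only [Set.mem_univ, iff_true]
    have := hmul x 1 h1
    rwa [mul_one] at this
  -- B is prime
  have hprime : ∀ x y : U, x * y ∈ B → x ∈ B ∨ y ∈ B := by
    intro x y hxy
    rw [hB] at hxy
    obtain ⟨n, hn, hm⟩ := hxy
    rcases htot x y with h | h
    · left
      rw [hB]
      refine ⟨2 * n, by omega, ?_⟩
      have hxx : (1 + 1) * (x * x) + (1 + 1) * (x * y) = (1 + 1) * (x * y) := by
        have := hle_mul x y x x h (hrefl x)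
        rwa [mul_comm y x] at this
      have hle := hle_pow _ _ hxx n
      have h2n : x ^ (2 * n) = (x * x) ^ n := by rw [pow_mul, pow_two]
      rw [h2n]
      exact hsatmem _ ⟨(1 + 1) * (x * y) ^ n, hm, by rw [hle]; exact hm⟩
    · right
      rw [hB]
      refine ⟨2 * n, by omega, ?_⟩
      have h' : (1 + 1) * y + (1 + 1) * x = (1 + 1) * x := by rwa [add_comm] at h
      have hyy : (1 + 1) * (y * y) + (1 + 1) * (x * y) = (1 + 1) * (x * y) := by
        exact hle_mul y x y y h' (hrefl y)
      have hle := hle_pow _ _ hyy n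
      have h2n : y ^ (2 * n) = (y * y) ^ n := by rw [pow_mul, pow_two]
      rw [h2n]
      exact hsatmem _ ⟨(1 + 1) * (x * y) ^ n, hm, by rw [hle]; exact hm⟩
  refine ⟨hideal, hBne, hprime, hBR, ?_, ?_⟩
  · rw [hBR]
    intro x hx
    exact ⟨1, le_refl 1, by simpa using hx⟩
  · intro P hP hPne hPprime hIP x hx
    rw [hBR] at hx
    obtain ⟨n, hn, h⟩ := hx
    have hxP : x ^ n ∈ P := hIP h
    have hpowP : ∀ m : ℕ, x ^ m ∈ P → 1 ≤ m → x ∈ P := by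
      intro m
      induction m with
      | zero => intro _ hm; omega
      | succ m ih =>
        intro hxm _
        rcases Nat.eq_zero_or_pos m with rfl | hmpos
        · simpa using hxm
        · rw [pow_succ] at hxm
          rcases hPprime _ _ hxm with h' | h'
          · exact ih h' hmpos
          · exact h'
    exact hpowP n hxP hn
end

section
/- Let U be a supertropical semiring whose ghost ideal M is a cancellative semidomain: for a, b ∈ M, a*b = 0 implies a = 0 or b = 0, and for a, b, c ∈ M with c ≠ 0, a*c = b*c implies a = b. Let 𝔞 be a saturated ideal of U with 𝔞 ≠ U, and write x ~ y for x ~E(𝔞) y. Then the following are equivalent: (1) for all a, b, c ∈ M, if a*c ~ b*c and not c ~ 0, then a ~ b (i.e., the ghost ideal of U/E(𝔞) is cancellative); (2) for all a, b ∈ M, a*b ∈ 𝔞 implies a ∈ 𝔞 or b ∈ 𝔞 (𝔞 ∩ M is a prime ideal of M); (3) 𝔞 is a prime ideal of U. -/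
namespace Supertropical

variable {U : Type*} [CommSemiring U]

def IsGhost (x : U) : Prop := (1 + 1) * x = x

theorem isGhost_zero : IsGhost (0 : U) := mul_zero _

theorem IsGhost.mul_right {a : U} (ha : IsGhost a) (b : U) : IsGhost (a * b) := by
  rw [IsGhost, ← mul_assoc, ha]

theorem isGhost_two_mul (hST1 : (1 + 1 : U) * (1 + 1) = 1 + 1) (x : U) :
    IsGhost ((1 + 1) * x) := by
  rw [IsGhost, ← mul_assoc, hST1]

theorem one_add_one_add_one_eq (hST1 : (1 + 1 : U) * (1 + 1) = 1 + 1)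
    (hST2 : ∀ x y : U, (1 + 1) * x = (1 + 1) * y → x + y = (1 + 1) * x) :
    (1 + 1 + 1 : U) = 1 + 1 := by
  have h := hST2 (1 + 1) 1 (by rw [hST1, mul_one])
  rwa [hST1] at h

theorem IsGhost.add_eq_or_add_eq
    (hST3 : ∀ x y : U, (1 + 1) * x ≠ (1 + 1) * y → x + y = x ∨ x + y = y)
    {x y : U} (hx : IsGhost x) (hy : IsGhost y) : x + y = x ∨ x + y = y := by
  by_cases h : (1 + 1) * x = (1 + 1) * y
  · obtain rfl : y = x := by rw [← hx, ← hy, h]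
    exact Or.inl ((by ring : y + y = (1 + 1) * y).trans hy)
  · exact hST3 x y h

variable {I : Set U}

theorem mem_of_add_mem (hsat : STSat I = I) {x a : U} (ha : a ∈ I) (hxa : x + a ∈ I) :
    x ∈ I :=
  hsat ▸ (⟨a, ha, hxa⟩ : x ∈ STSat I)

theorem stRel_of_mem_of_mem {a b : U} (ha : a ∈ I) (hb : b ∈ I) : STRel I a b :=
  ⟨b, hb, a, ha, add_comm a b⟩

theorem stRel_zero_iff (h0 : (0 : U) ∈ I) (hsat : STSat I = I) (c : U) :
    STRel I c 0 ↔ c ∈ I := by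
  constructor
  · rintro ⟨a, ha, b, hb, h⟩
    rw [zero_add] at h
    exact mem_of_add_mem hsat ha (h ▸ hb)
  · intro hc
    exact ⟨0, h0, c, hc, by rw [add_zero, zero_add]⟩

theorem mem_of_two_mul_mem (hthree : (1 + 1 + 1 : U) = 1 + 1) (hsat : STSat I = I) {z : U}
    (hz : (1 + 1) * z ∈ I) : z ∈ I := by
  have hzz : (1 + 1) * z = z + z := by ring
  refine mem_of_add_mem hsat (hzz ▸ hz) ?_
  rwa [show z + (z + z) = (1 + 1 + 1) * z by ring, hthree]

theorem IsGhost.eq_or_mem_of_add_eq_add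
    (hST3 : ∀ x y : U, (1 + 1) * x ≠ (1 + 1) * y → x + y = x ∨ x + y = y)
    (hsat : STSat I = I) {u v p q : U} (hu : IsGhost u) (hv : IsGhost v) (hp : IsGhost p)
    (hq : IsGhost q) (hpI : p ∈ I) (hqI : q ∈ I) (h : u + p = v + q) :
    u = v ∨ (u ∈ I ∧ v ∈ I) := by
  have huI : u + p = p → u ∈ I ∧ v ∈ I := fun hup =>
    ⟨mem_of_add_mem hsat hpI (by rwa [hup]), mem_of_add_mem hsat hqI (by rwa [← h, hup])⟩
  have hvI : v + q = q → u ∈ I ∧ v ∈ I := fun hvq =>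
    ⟨mem_of_add_mem hsat hpI (by rwa [h, hvq]), mem_of_add_mem hsat hqI (by rwa [hvq])⟩
  rcases hu.add_eq_or_add_eq hST3 hp with hup | hup
  · rcases hv.add_eq_or_add_eq hST3 hq with hvq | hvq
    · exact Or.inl (by rw [← hup, h, hvq])
    · exact Or.inr (hvI hvq)
  · exact Or.inr (huI hup)

theorem ghost_prime_of_cancel (h0 : (0 : U) ∈ I) (hsat : STSat I = I)
    (hcanc : ∀ a b c : U, IsGhost a → IsGhost b → IsGhost c →
      STRel I (a * c) (b * c) → ¬ STRel I c 0 → STRel I a b)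
    {a b : U} (ha : IsGhost a) (hb : IsGhost b) (hab : a * b ∈ I) : a ∈ I ∨ b ∈ I := by
  rw [← stRel_zero_iff h0 hsat a, ← stRel_zero_iff h0 hsat b]
  by_cases haI : STRel I a 0
  · exact Or.inl haI
  · refine Or.inr (hcanc b 0 a hb isGhost_zero ha ?_ haI)
    rw [zero_mul, mul_comm]
    exact (stRel_zero_iff h0 hsat _).2 hab

theorem cancel_of_ghost_prime (hST1 : (1 + 1 : U) * (1 + 1) = 1 + 1)
    (hST3 : ∀ x y : U, (1 + 1) * x ≠ (1 + 1) * y → x + y = x ∨ x + y = y)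
    (hcanc : ∀ a b c : U, IsGhost a → IsGhost b → IsGhost c → c ≠ 0 → a * c = b * c → a = b)
    (hI : IsSemiringIdeal I) (hsat : STSat I = I)
    (hprime : ∀ a b : U, IsGhost a → IsGhost b → a * b ∈ I → a ∈ I ∨ b ∈ I)
    {a b c : U} (ha : IsGhost a) (hb : IsGhost b) (hc : IsGhost c)
    (hrel : STRel I (a * c) (b * c)) (hc0 : ¬ STRel I c 0) : STRel I a b := by
  have hcI : c ∉ I := fun h => hc0 ((stRel_zero_iff hI.1 hsat c).2 h)
  obtain ⟨p, hp, q, hq, hpq⟩ := hrel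
  have hghost : a * c + (1 + 1) * p = b * c + (1 + 1) * q := by
    rw [← (ha.mul_right c), ← (hb.mul_right c), ← mul_add, ← mul_add, hpq]
  rcases (ha.mul_right c).eq_or_mem_of_add_eq_add hST3 hsat (hb.mul_right c)
    (isGhost_two_mul hST1 p) (isGhost_two_mul hST1 q) (hI.2.2 _ p hp) (hI.2.2 _ q hq)
    hghost with heq | ⟨hacI, hbcI⟩
  · rw [hcanc a b c ha hb hc (fun h => hcI (h ▸ hI.1)) heq]
    exact ⟨0, hI.1, 0, hI.1, rfl⟩
  · exact stRel_of_mem_of_mem ((hprime a c ha hc hacI).resolve_right hcI)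
      ((hprime b c hb hc hbcI).resolve_right hcI)

theorem prime_of_ghost_prime (hST1 : (1 + 1 : U) * (1 + 1) = 1 + 1)
    (hthree : (1 + 1 + 1 : U) = 1 + 1)
    (hmul : ∀ r : U, ∀ x ∈ I, r * x ∈ I) (hsat : STSat I = I)
    (hprime : ∀ a b : U, IsGhost a → IsGhost b → a * b ∈ I → a ∈ I ∨ b ∈ I)
    {x y : U} (hxy : x * y ∈ I) : x ∈ I ∨ y ∈ I := by
  have h : ((1 + 1) * x) * ((1 + 1) * y) ∈ I := by
    rw [show ((1 + 1) * x) * ((1 + 1) * y) = (1 + 1) * ((1 + 1) * (x * y)) by ring]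
    exact hmul _ _ (hmul _ _ hxy)
  exact (hprime _ _ (isGhost_two_mul hST1 x) (isGhost_two_mul hST1 y) h).imp
    (mem_of_two_mul_mem hthree hsat) (mem_of_two_mul_mem hthree hsat)

end Supertropical

open Supertropical in
theorem quotient_ghost_cancellative_iff_prime_general {U : Type*} [CommSemiring U]
    (hST1 : (1 + 1 : U) * (1 + 1) = 1 + 1)
    (hST2 : ∀ x y : U, (1 + 1) * x = (1 + 1) * y → x + y = (1 + 1) * x)
    (hST3 : ∀ x y : U, (1 + 1) * x ≠ (1 + 1) * y → x + y = x ∨ x + y = y)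
    (hcanc : ∀ a b c : U, (1 + 1) * a = a → (1 + 1) * b = b →
      (1 + 1) * c = c → c ≠ 0 → a * c = b * c → a = b)
    (I : Set U) (hI : IsSemiringIdeal I) (hsat : STSat I = I)
    (hne : I ≠ Set.univ) :
    ((∀ a b c : U, (1 + 1) * a = a → (1 + 1) * b = b → (1 + 1) * c = c →
        STRel I (a * c) (b * c) → ¬ STRel I c 0 → STRel I a b) ↔
      (∀ a b : U, (1 + 1) * a = a → (1 + 1) * b = b →
        a * b ∈ I → a ∈ I ∨ b ∈ I)) ∧
    ((∀ a b : U, (1 + 1) * a = a → (1 + 1) * b = b →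
        a * b ∈ I → a ∈ I ∨ b ∈ I) ↔
      (I ≠ Set.univ ∧ ∀ x y : U, x * y ∈ I → x ∈ I ∨ y ∈ I)) := by
  have hthree := one_add_one_add_one_eq hST1 hST2
  refine ⟨⟨fun h a b => ghost_prime_of_cancel hI.1 hsat h,
    fun h a b c => cancel_of_ghost_prime hST1 hST3 hcanc hI hsat h⟩, ⟨fun h => ?_, ?_⟩⟩
  · exact ⟨hne, fun x y => prime_of_ghost_prime hST1 hthree hI.2.2 hsat h⟩
  · rintro ⟨-, hprime⟩ a b _ _
    exact hprime a b

/-- Let `U` be supertropical with ghost ideal `M` a cancellative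
semidomain, and `𝔞 ≠ U` a saturated ideal. TFAE: (1) the ghost ideal of
`U/E(𝔞)` is cancellative; (2) `𝔞 ∩ M` is prime in `M`; (3) `𝔞` is prime. -/
theorem quotient_ghost_cancellative_iff_prime {U : Type*} [CommSemiring U]
    (hST1 : (1 + 1 : U) * (1 + 1) = 1 + 1)
    (hST2 : ∀ x y : U, (1 + 1) * x = (1 + 1) * y → x + y = (1 + 1) * x)
    (hST3 : ∀ x y : U, (1 + 1) * x ≠ (1 + 1) * y → x + y = x ∨ x + y = y)
    (hdom : ∀ a b : U, (1 + 1) * a = a → (1 + 1) * b = b →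
      a * b = 0 → a = 0 ∨ b = 0)
    (hcanc : ∀ a b c : U, (1 + 1) * a = a → (1 + 1) * b = b →
      (1 + 1) * c = c → c ≠ 0 → a * c = b * c → a = b)
    (I : Set U) (hI : IsSemiringIdeal I) (hsat : STSat I = I)
    (hne : I ≠ Set.univ) :
    ((∀ a b c : U, (1 + 1) * a = a → (1 + 1) * b = b → (1 + 1) * c = c →
        STRel I (a * c) (b * c) → ¬ STRel I c 0 → STRel I a b) ↔
      (∀ a b : U, (1 + 1) * a = a → (1 + 1) * b = b →
        a * b ∈ I → a ∈ I ∨ b ∈ I)) ∧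
    ((∀ a b : U, (1 + 1) * a = a → (1 + 1) * b = b →
        a * b ∈ I → a ∈ I ∨ b ∈ I) ↔
      (I ≠ Set.univ ∧ ∀ x y : U, x * y ∈ I → x ∈ I ∨ y ∈ I)) :=
  quotient_ghost_cancellative_iff_prime_general hST1 hST2 hST3 hcanc I hI hsat hne
end

section
/- Let U be a supertropical semiring with ghost ideal M and E a TE-relation on U. Then 𝔮 := {x ∈ U : x ~E 0} is a saturated ideal of U, the relation E(𝔮) is contained in E, and 𝔮 is the largest ideal with this property: every ideal 𝔞 of U with E(𝔞) ⊆ E satisfies 𝔞 ⊆ 𝔮. -/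
section Semiring

variable {R : Type*} [CommSemiring R]

theorem STSat_eq_self {I : Set R} (h0 : (0 : R) ∈ I)
    (hsummand : ∀ x a : R, x + a ∈ I → x ∈ I) : STSat I = I := by
  ext x
  constructor
  · rintro ⟨a, -, hxa⟩
    exact hsummand x a hxa
  · intro hx
    exact ⟨0, h0, by rwa [add_zero]⟩

theorem STRel_le_of_rel_add {I : Set R} {E : R → R → Prop} (hE : Equivalence E)
    (habsorb : ∀ x, ∀ a ∈ I, E x (x + a)) (x y : R) : STRel I x y → E x y := by
  rintro ⟨a, ha, b, hb, hab⟩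
  have hxa : E x (y + b) := hab ▸ habsorb x a ha
  exact hE.trans hxa (hE.symm (habsorb y b hb))

theorem subset_setOf_rel_zero_of_STRel_le {A : Set R} {E : R → R → Prop} (hA0 : (0 : R) ∈ A)
    (hAE : ∀ x y : R, STRel A x y → E x y) : A ⊆ {x | E x 0} :=
  fun x hx => hAE x 0 ⟨0, hA0, x, hx, by rw [add_zero, zero_add]⟩

theorem rel_zero_mul_left {E : R → R → Prop}
    (hTE1 : ∀ x y z : R, E x y → E (x * z) (y * z)) {x : R} (r : R) (hx : E x 0) :
    E (r * x) 0 := by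
  simpa only [zero_mul, mul_comm x r] using hTE1 x 0 r hx

end Semiring

section Supertropical

variable {U : Type*} [CommSemiring U]

theorem ghost_add_self (hST1 : (1 + 1 : U) * (1 + 1) = 1 + 1) (x : U) :
    (1 + 1) * x + (1 + 1) * x = (1 + 1) * x :=
  calc (1 + 1) * x + (1 + 1) * x = (1 + 1) * (1 + 1) * x := by ring
    _ = (1 + 1) * x := by rw [hST1]

theorem mul_ghost_eq_ghost (hST1 : (1 + 1 : U) * (1 + 1) = 1 + 1) (x : U) :
    (1 + 1) * ((1 + 1) * x) = (1 + 1) * x := by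
  rw [← mul_assoc, hST1]

theorem add_eq_left_or_right_or_ghost
    (hST2 : ∀ x y : U, (1 + 1) * x = (1 + 1) * y → x + y = (1 + 1) * x)
    (hST3 : ∀ x y : U, (1 + 1) * x ≠ (1 + 1) * y → x + y = x ∨ x + y = y) (x y : U) :
    x + y = x ∨ x + y = y ∨ (x + y = (1 + 1) * x ∧ (1 + 1) * x = (1 + 1) * y) := by
  by_cases h : (1 + 1) * x = (1 + 1) * y
  · exact Or.inr (Or.inr ⟨hST2 x y h, h⟩)
  · exact (hST3 x y h).imp_right Or.inl

variable (hST1 : (1 + 1 : U) * (1 + 1) = 1 + 1)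
  (hST2 : ∀ x y : U, (1 + 1) * x = (1 + 1) * y → x + y = (1 + 1) * x)
  (hST3 : ∀ x y : U, (1 + 1) * x ≠ (1 + 1) * y → x + y = x ∨ x + y = y)
  {E : U → U → Prop} (hE : Equivalence E)
  (hTE1 : ∀ x y z : U, E x y → E (x * z) (y * z))
  (hTE2 : ∀ a1 a2 a3 a4 : U, (1 + 1) * a1 = a1 → (1 + 1) * a2 = a2 →
    (1 + 1) * a3 = a3 → (1 + 1) * a4 = a4 → a1 + a2 = a2 → a3 + a4 = a4 →
    E a1 a4 → E a2 a3 → E a1 a2)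
  (hTE3 : ∀ x : U, E ((1 + 1) * x) 0 → E x 0)

include hST2 hST3 hTE1 in
theorem add_rel_zero {x y : U} (hx : E x 0) (hy : E y 0) : E (x + y) 0 := by
  rcases add_eq_left_or_right_or_ghost hST2 hST3 x y with h | h | ⟨h, -⟩
  all_goals rw [h]
  · exact hx
  · exact hy
  · exact rel_zero_mul_left hTE1 _ hx

include hST1 hE hTE1 hTE2 hTE3

theorem rel_zero_of_add_rel_zero {x : U} (a : U) (hxa : E (x + a) 0) : E x 0 := by
  apply hTE3
  have hle : (1 + 1) * x + (1 + 1) * (x + a) = (1 + 1) * (x + a) := by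
    rw [mul_add, ← add_assoc, ghost_add_self hST1]
  have h0 : E 0 ((1 + 1) * (x + a)) := hE.symm (rel_zero_mul_left hTE1 _ hxa)
  exact hE.symm <| hTE2 0 _ _ _ (mul_zero _) (mul_ghost_eq_ghost hST1 x)
    (mul_ghost_eq_ghost hST1 x) (mul_ghost_eq_ghost hST1 _) (zero_add _) hle h0 (hE.refl _)

include hST2 hST3

theorem rel_add_of_rel_zero (x : U) {a : U} (ha : E a 0) : E x (x + a) := by
  rcases add_eq_left_or_right_or_ghost hST2 hST3 x a with h | h | ⟨h, hghost⟩
  · rw [h]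
    exact hE.refl x
  · have hx : E x 0 := rel_zero_of_add_rel_zero hST1 hE hTE1 hTE2 hTE3 a (by rwa [h])
    rw [h]
    exact hE.trans hx (hE.symm ha)
  · have hex : E ((1 + 1) * x) 0 := by
      rw [hghost]
      exact rel_zero_mul_left hTE1 _ ha
    rw [h]
    exact hE.trans (hTE3 x hex) (hE.symm hex)

end Supertropical

/-- For a TE-relation `E` on a supertropical semiring `U`, the
class `𝔮 = [0]_E` is a saturated ideal of `U` with `E(𝔮) ⊆ E`, and `𝔮` is the
largest ideal `𝔞` with `E(𝔞) ⊆ E`. -/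
theorem TE_relation_zero_class {U : Type*} [CommSemiring U]
    (hST1 : (1 + 1 : U) * (1 + 1) = 1 + 1)
    (hST2 : ∀ x y : U, (1 + 1) * x = (1 + 1) * y → x + y = (1 + 1) * x)
    (hST3 : ∀ x y : U, (1 + 1) * x ≠ (1 + 1) * y → x + y = x ∨ x + y = y)
    (E : U → U → Prop) (hE : Equivalence E)
    (hTE1 : ∀ x y z : U, E x y → E (x * z) (y * z))
    (hTE2 : ∀ a1 a2 a3 a4 : U, (1 + 1) * a1 = a1 → (1 + 1) * a2 = a2 →
      (1 + 1) * a3 = a3 → (1 + 1) * a4 = a4 → a1 + a2 = a2 → a3 + a4 = a4 →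
      E a1 a4 → E a2 a3 → E a1 a2)
    (hTE3 : ∀ x : U, E ((1 + 1) * x) 0 → E x 0)
    (Q : Set U) (hQ : Q = {x : U | E x 0}) :
    IsSemiringIdeal Q ∧ STSat Q = Q ∧
    (∀ x y : U, STRel Q x y → E x y) ∧
    (∀ A : Set U, IsSemiringIdeal A → (∀ x y : U, STRel A x y → E x y) →
      A ⊆ Q) := by
  subst hQ
  refine ⟨⟨hE.refl 0, ?_, ?_⟩, ?_, ?_, ?_⟩
  · exact fun x hx y hy => add_rel_zero hST2 hST3 hTE1 hx hy
  · exact fun r x hx => rel_zero_mul_left hTE1 r hx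
  · exact STSat_eq_self (hE.refl 0) fun x a =>
      rel_zero_of_add_rel_zero hST1 hE hTE1 hTE2 hTE3 a
  · exact STRel_le_of_rel_add hE fun x a =>
      rel_add_of_rel_zero hST1 hST2 hST3 hE hTE1 hTE2 hTE3 x
  · exact fun A hA hAE => subset_setOf_rel_zero_of_STRel_le hA.1 hAE
end

section
/- Let U be a supertropical semiring with ghost ideal M and E an equivalence relation on U. Then E is additive (x ~E y implies x + z ~E y + z for all z) if and only if the following three conditions hold: (AE1) x ~E y implies e*x ~E e*y; (AE2) the restriction of E to M is order compatible with respect to the ghost order (for a1, a2, a3, a4 ∈ M with a1 ≤ a2, a3 ≤ a4, a1 ~E a4 and a2 ~E a3, one has a1 ~E a2); (AE3) whenever e*x < e*y in the ghost order and e*x ~E e*y, then e*x ~E y. -/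
/-! Write `e = 1 + 1` and `ν x = e * x`. In a supertropical semiring the ghost order is total,
and `x + z` is `z` when `ν x < ν z`, `x` when `ν z < ν x`, and `ν x` when `ν x = ν z`. So adding
`z` to an `E`-related pair `x, y` with `ν x ≤ ν y` replaces each summand by `z`, by itself or by
its ghost, according to where `ν z` falls. Every resulting pair is related by (AE1), by (AE3)
(which relates `ν x` to `y`), or, when `ν x < ν z < ν y`, by (AE2) applied to
`ν x ≤ ν z ≤ ν z ≤ ν y` followed by (AE3). Conversely (AE1)-(AE3) come from adding `x`, `y` or
the larger ghost to a related pair. -/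

structure IsSupertropical_s14 (U : Type*) [CommSemiring U] : Prop where
  e_mul_e : (1 + 1 : U) * (1 + 1) = 1 + 1
  add_of_e_mul_eq : ∀ x y : U, (1 + 1) * x = (1 + 1) * y → x + y = (1 + 1) * x
  add_of_e_mul_ne : ∀ x y : U, (1 + 1) * x ≠ (1 + 1) * y → x + y = x ∨ x + y = y

section Relations

variable {U : Type*} [CommSemiring U]

/-- The strict ghost order `ν x < ν y`. -/
def GhostLT (x y : U) : Prop :=
  (1 + 1) * x + (1 + 1) * y = (1 + 1) * y ∧ (1 + 1) * x ≠ (1 + 1) * y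

def IsAdditive (E : U → U → Prop) : Prop :=
  ∀ x y z : U, E x y → E (x + z) (y + z)

def AE1 (E : U → U → Prop) : Prop :=
  ∀ x y : U, E x y → E ((1 + 1) * x) ((1 + 1) * y)

def AE2 (E : U → U → Prop) : Prop :=
  ∀ a1 a2 a3 a4 : U, (1 + 1) * a1 = a1 → (1 + 1) * a2 = a2 →
    (1 + 1) * a3 = a3 → (1 + 1) * a4 = a4 →
    a1 + a2 = a2 → a3 + a4 = a4 → E a1 a4 → E a2 a3 → E a1 a2

def AE3 (E : U → U → Prop) : Prop :=
  ∀ x y : U, (1 + 1) * x + (1 + 1) * y = (1 + 1) * y →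
    (1 + 1) * x ≠ (1 + 1) * y → E ((1 + 1) * x) ((1 + 1) * y) → E ((1 + 1) * x) y

theorem GhostLT.trans {x y z : U} (hxy : GhostLT x y) (hyz : GhostLT y z) : GhostLT x z := by
  refine ⟨?_, fun hxz => hxy.2 ?_⟩
  · rw [← hyz.1, ← add_assoc, hxy.1]
  · rw [← hxy.1, hxz, add_comm ((1 + 1) * z), hyz.1]

theorem GhostLT.congr_left {x x' y : U} (h : (1 + 1) * x = (1 + 1) * x') (hxy : GhostLT x y) :
    GhostLT x' y := by
  rwa [GhostLT, ← h]

theorem GhostLT.congr_right {x y y' : U} (h : (1 + 1) * y = (1 + 1) * y') (hxy : GhostLT x y) :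
    GhostLT x y' := by
  rwa [GhostLT, ← h]

end Relations

namespace IsSupertropical_s14

variable {U : Type*} [CommSemiring U]

theorem e_mul_e_mul (hU : IsSupertropical_s14 U) (x : U) :
    (1 + 1) * ((1 + 1) * x) = (1 + 1) * x := by
  rw [← mul_assoc, hU.e_mul_e]

theorem e_mul_add_self (hU : IsSupertropical_s14 U) (x : U) : (1 + 1) * x + x = (1 + 1) * x := by
  rw [hU.add_of_e_mul_eq _ x (hU.e_mul_e_mul x), hU.e_mul_e_mul]

theorem ghost_trichotomy (hU : IsSupertropical_s14 U) (x y : U) :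
    GhostLT x y ∨ (1 + 1) * x = (1 + 1) * y ∨ GhostLT y x := by
  by_cases heq : (1 + 1) * x = (1 + 1) * y
  · exact Or.inr (Or.inl heq)
  have hne : (1 + 1) * ((1 + 1) * x) ≠ (1 + 1) * ((1 + 1) * y) := by
    rwa [hU.e_mul_e_mul, hU.e_mul_e_mul]
  rcases hU.add_of_e_mul_ne _ _ hne with h | h
  · exact Or.inr (Or.inr ⟨by rwa [add_comm], Ne.symm heq⟩)
  · exact Or.inl ⟨h, heq⟩

theorem add_eq_right_of_ghostLT (hU : IsSupertropical_s14 U) {x y : U} (h : GhostLT x y) :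
    x + y = y := by
  refine (hU.add_of_e_mul_ne x y h.2).resolve_left fun hx => h.2 ?_
  rw [← h.1, ← mul_add, hx]

theorem add_eq_left_of_ghostLT (hU : IsSupertropical_s14 U) {x y : U} (h : GhostLT y x) :
    x + y = x := by
  rw [add_comm, hU.add_eq_right_of_ghostLT h]

theorem ghostLT_e_mul_left (hU : IsSupertropical_s14 U) {x y : U} (h : GhostLT x y) :
    GhostLT ((1 + 1) * x) y :=
  h.congr_left (hU.e_mul_e_mul x).symm

end IsSupertropical_s14

section Additive

variable {U : Type*} [CommSemiring U] {E : U → U → Prop}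

theorem IsAdditive.ae1 (hE : Equivalence E) (hadd : IsAdditive E) : AE1 E := by
  intro x y hxy
  have hx : E (x + x) (y + x) := hadd x y x hxy
  have hy : E (x + y) (y + y) := hadd x y y hxy
  rw [add_comm x y] at hy
  simpa only [add_mul, one_mul] using hE.trans hx hy

theorem IsAdditive.ae2 (hE : Equivalence E) (hadd : IsAdditive E) : AE2 E := by
  intro a1 a2 a3 a4 _ _ _ _ h12 h34 h14 h23
  have h24 : E a2 (a4 + a2) := by simpa only [h12] using hadd a1 a4 a2 h14
  have h44 : E (a2 + a4) a4 := by simpa only [h34] using hadd a2 a3 a4 h23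
  rw [add_comm] at h24
  exact hE.trans h14 (hE.symm (hE.trans h24 h44))

theorem IsAdditive.ae3 (hU : IsSupertropical_s14 U) (hE : Equivalence E) (hadd : IsAdditive E) :
    AE3 E := by
  intro x y hle hne hxy
  have hy : E y ((1 + 1) * y) := by
    simpa only [hU.add_eq_right_of_ghostLT (hU.ghostLT_e_mul_left ⟨hle, hne⟩),
      hU.e_mul_add_self] using hadd _ _ y hxy
  exact hE.trans hxy (hE.symm hy)

theorem add_right_of_e_mul_eq (hU : IsSupertropical_s14 U) (hE : Equivalence E) (h1 : AE1 E)
    {x y : U} (hxy : E x y) (heq : (1 + 1) * x = (1 + 1) * y) (z : U) :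
    E (x + z) (y + z) := by
  rcases hU.ghost_trichotomy z x with hzx | hzx | hxz
  · rw [hU.add_eq_left_of_ghostLT hzx, hU.add_eq_left_of_ghostLT (hzx.congr_right heq)]
    exact hxy
  · rw [hU.add_of_e_mul_eq x z hzx.symm, hU.add_of_e_mul_eq y z (heq.symm.trans hzx.symm)]
    exact h1 x y hxy
  · rw [hU.add_eq_right_of_ghostLT hxz, hU.add_eq_right_of_ghostLT (hxz.congr_left heq)]
    exact hE.refl z

theorem add_right_of_ghostLT (hU : IsSupertropical_s14 U) (hE : Equivalence E) (h1 : AE1 E)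
    (h2 : AE2 E) (h3 : AE3 E) {x y : U} (hxy : E x y) (hlt : GhostLT x y) (z : U) :
    E (x + z) (y + z) := by
  have hxy' : E ((1 + 1) * x) y := h3 x y hlt.1 hlt.2 (h1 x y hxy)
  rcases hU.ghost_trichotomy z x with hzx | hzx | hxz
  · rw [hU.add_eq_left_of_ghostLT hzx, hU.add_eq_left_of_ghostLT (hzx.trans hlt)]
    exact hxy
  · rw [hU.add_of_e_mul_eq x z hzx.symm, hU.add_eq_left_of_ghostLT (hlt.congr_left hzx.symm)]
    exact hxy'
  rw [hU.add_eq_right_of_ghostLT hxz]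
  rcases hU.ghost_trichotomy z y with hzy | hzy | hyz
  · have hxz' : E ((1 + 1) * x) ((1 + 1) * z) :=
      h2 _ _ _ _ (hU.e_mul_e_mul x) (hU.e_mul_e_mul z) (hU.e_mul_e_mul z) (hU.e_mul_e_mul y)
        hxz.1 hzy.1 (h1 x y hxy) (hE.refl _)
    rw [hU.add_eq_left_of_ghostLT hzy]
    exact hE.trans (hE.symm (h3 x z hxz.1 hxz.2 hxz')) hxy'
  · have hxz' : E ((1 + 1) * x) z := h3 x z hxz.1 hxz.2 (by rw [hzy]; exact h1 x y hxy)
    rw [hU.add_of_e_mul_eq y z hzy.symm]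
    exact hE.trans (hE.symm hxz') (h1 x y hxy)
  · rw [hU.add_eq_right_of_ghostLT hyz]
    exact hE.refl z

theorem isAdditive_of_ae1_ae2_ae3 (hU : IsSupertropical_s14 U) (hE : Equivalence E) (h1 : AE1 E)
    (h2 : AE2 E) (h3 : AE3 E) : IsAdditive E := by
  intro x y z hxy
  rcases hU.ghost_trichotomy x y with hlt | heq | hgt
  · exact add_right_of_ghostLT hU hE h1 h2 h3 hxy hlt z
  · exact add_right_of_e_mul_eq hU hE h1 hxy heq z
  · exact hE.symm (add_right_of_ghostLT hU hE h1 h2 h3 (hE.symm hxy) hgt z)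

end Additive

/-- An equivalence relation `E` on a supertropical semiring `U`
is additive iff it satisfies AE1, AE2 (order compatibility on the ghost ideal)
and AE3. -/
theorem additive_iff_AE1_AE2_AE3 {U : Type*} [CommSemiring U]
    (hST1 : (1 + 1 : U) * (1 + 1) = 1 + 1)
    (hST2 : ∀ x y : U, (1 + 1) * x = (1 + 1) * y → x + y = (1 + 1) * x)
    (hST3 : ∀ x y : U, (1 + 1) * x ≠ (1 + 1) * y → x + y = x ∨ x + y = y)
    (E : U → U → Prop) (hE : Equivalence E) :
    (∀ x y z : U, E x y → E (x + z) (y + z)) ↔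
      ((∀ x y : U, E x y → E ((1 + 1) * x) ((1 + 1) * y)) ∧
        (∀ a1 a2 a3 a4 : U, (1 + 1) * a1 = a1 → (1 + 1) * a2 = a2 →
          (1 + 1) * a3 = a3 → (1 + 1) * a4 = a4 →
          a1 + a2 = a2 → a3 + a4 = a4 → E a1 a4 → E a2 a3 → E a1 a2) ∧
        (∀ x y : U, (1 + 1) * x + (1 + 1) * y = (1 + 1) * y →
          (1 + 1) * x ≠ (1 + 1) * y → E ((1 + 1) * x) ((1 + 1) * y) →
          E ((1 + 1) * x) y)) := by
  have hU : IsSupertropical_s14 U := ⟨hST1, hST2, hST3⟩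
  exact ⟨fun hadd =>
      ⟨IsAdditive.ae1 hE hadd, IsAdditive.ae2 hE hadd, IsAdditive.ae3 hU hE hadd⟩,
    fun ⟨h1, h2, h3⟩ => isAdditive_of_ae1_ae2_ae3 hU hE h1 h2 h3⟩
end

section
/- Let U be a supertropical semiring with ghost ideal M, E an equivalence relation on U, and A(E) := {x ∈ U : x ~E e*x}. Then: (a) M ⊆ A(E), and x, y ∈ A(E) implies x + y ∈ A(E); (b) if E is ghost compatible, then A(E) = {x ∈ U : there exists z ∈ M with x ~E z}; (c) if E is multiplicative, then A(E) is an ideal of U (contains 0, is closed under addition, and U*A(E) ⊆ A(E)). -/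
/-! By (ST2) and (ST3) a sum `x + y` is either one of its summands or a ghost, and ghosts lie in
`A(E)` by reflexivity; hence `A(E)` is closed under addition. The rest only uses `e * e = e`
and the compatibility of `E` with `e * _` or with multiplication. -/

namespace Supertropical

variable {U : Type*} [CommSemiring U] {E : U → U → Prop}

theorem two_mul_two_mul (hST1 : (1 + 1 : U) * (1 + 1) = 1 + 1) (x : U) :
    (1 + 1) * ((1 + 1) * x) = (1 + 1) * x := by
  rw [← mul_assoc, hST1]

theorem add_eq_left_or_add_eq_right_or_ghost (hST1 : (1 + 1 : U) * (1 + 1) = 1 + 1)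
    (hST2 : ∀ x y : U, (1 + 1) * x = (1 + 1) * y → x + y = (1 + 1) * x)
    (hST3 : ∀ x y : U, (1 + 1) * x ≠ (1 + 1) * y → x + y = x ∨ x + y = y) (x y : U) :
    x + y = x ∨ x + y = y ∨ (1 + 1) * (x + y) = x + y := by
  by_cases h : (1 + 1) * x = (1 + 1) * y
  · rw [hST2 x y h, two_mul_two_mul hST1]
    exact Or.inr (Or.inr rfl)
  · rcases hST3 x y h with hx | hy
    · exact Or.inl hx
    · exact Or.inr (Or.inl hy)

theorem equiv_two_mul_of_ghost (hrefl : ∀ x, E x x) {x : U} (hx : (1 + 1) * x = x) :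
    E x ((1 + 1) * x) := by
  rw [hx]
  exact hrefl x

theorem equiv_two_mul_add (hST1 : (1 + 1 : U) * (1 + 1) = 1 + 1)
    (hST2 : ∀ x y : U, (1 + 1) * x = (1 + 1) * y → x + y = (1 + 1) * x)
    (hST3 : ∀ x y : U, (1 + 1) * x ≠ (1 + 1) * y → x + y = x ∨ x + y = y)
    (hrefl : ∀ x, E x x) {x y : U} (hx : E x ((1 + 1) * x)) (hy : E y ((1 + 1) * y)) :
    E (x + y) ((1 + 1) * (x + y)) := by
  rcases add_eq_left_or_add_eq_right_or_ghost hST1 hST2 hST3 x y with hsum | hsum | hghost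
  · rwa [hsum]
  · rwa [hsum]
  · exact equiv_two_mul_of_ghost hrefl hghost

theorem equiv_mul_two_mul (hm : ∀ x y z : U, E x y → E (x * z) (y * z)) {x : U} (r : U)
    (hx : E x ((1 + 1) * x)) : E (r * x) ((1 + 1) * (r * x)) := by
  have h := hm x ((1 + 1) * x) r hx
  rwa [mul_assoc, mul_comm x r] at h

theorem setOf_equiv_two_mul_eq_setOf_equiv_ghost (hST1 : (1 + 1 : U) * (1 + 1) = 1 + 1)
    (hE : Equivalence E) (hgc : ∀ x y : U, E x y → E ((1 + 1) * x) ((1 + 1) * y)) :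
    {x : U | E x ((1 + 1) * x)} = {x : U | ∃ z : U, (1 + 1) * z = z ∧ E x z} := by
  ext x
  constructor
  · intro hx
    exact ⟨(1 + 1) * x, two_mul_two_mul hST1 x, hx⟩
  · rintro ⟨z, hz, hxz⟩
    have hez : E ((1 + 1) * x) z := by simpa only [hz] using hgc x z hxz
    exact hE.trans hxz (hE.symm hez)

end Supertropical

open Supertropical in
/-- Properties of `A(E) = {x | x ~E e*x}` for an equivalence
relation `E` on a supertropical semiring: (a) `M ⊆ A(E)` and `A(E)` is closed
under addition; (b) if `E` is ghost compatible then `A(E)` consists of the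
elements equivalent to some ghost; (c) if `E` is multiplicative then `A(E)` is
an ideal of `U`. -/
theorem AE_circle_properties {U : Type*} [CommSemiring U]
    (hST1 : (1 + 1 : U) * (1 + 1) = 1 + 1)
    (hST2 : ∀ x y : U, (1 + 1) * x = (1 + 1) * y → x + y = (1 + 1) * x)
    (hST3 : ∀ x y : U, (1 + 1) * x ≠ (1 + 1) * y → x + y = x ∨ x + y = y)
    (E : U → U → Prop) (hE : Equivalence E) :
    -- (a)
    ((∀ x : U, (1 + 1) * x = x → E x ((1 + 1) * x)) ∧
      (∀ x y : U, E x ((1 + 1) * x) → E y ((1 + 1) * y) →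
        E (x + y) ((1 + 1) * (x + y)))) ∧
    -- (b)
    ((∀ x y : U, E x y → E ((1 + 1) * x) ((1 + 1) * y)) →
      {x : U | E x ((1 + 1) * x)} =
        {x : U | ∃ z : U, (1 + 1) * z = z ∧ E x z}) ∧
    -- (c)
    ((∀ x y z : U, E x y → E (x * z) (y * z)) →
      IsSemiringIdeal {x : U | E x ((1 + 1) * x)}) := by
  have add_mem (x y : U) := equiv_two_mul_add (x := x) (y := y) hST1 hST2 hST3 hE.refl
  refine ⟨⟨fun x ↦ equiv_two_mul_of_ghost hE.refl, add_mem⟩,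
    setOf_equiv_two_mul_eq_setOf_equiv_ghost hST1 hE,
    fun hm ↦ ⟨equiv_two_mul_of_ghost hE.refl (mul_zero _), fun x hx y hy ↦ add_mem x y hx hy,
      fun r _ ↦ equiv_mul_two_mul hm r⟩⟩
end

section
/- Let U be a supertropical semiring with ghost ideal M, Φ an equivalence relation on the set M, 𝔄 ⊆ U a subset with M ⊆ 𝔄, and E := E(U,𝔄,Φ). Then E is a ghost compatible equivalence relation on U whose restriction to M is Φ, and: (i) A(E) := {x ∈ U : x ~E e*x} equals 𝔄; (ii) E is the finest ghost compatible equivalence relation on U whose restriction to M contains Φ and with A(E) containing 𝔄: for every ghost compatible equivalence relation F on U such that Φ(a,b) implies a ~F b for all a, b ∈ M and such that every x ∈ 𝔄 satisfies x ~F e*x, the relation E is contained in F (x ~E y implies x ~F y). -/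
/-- The relation `E(U,𝔄,Φ)`: `x ~ y` iff `x = y`, or `x, y ∈ 𝔄` and
`Φ(e*x, e*y)`. -/
def EUAPhi {U : Type*} [CommSemiring U] (A : Set U) (Φ : U → U → Prop)
    (x y : U) : Prop :=
  x = y ∨ (x ∈ A ∧ y ∈ A ∧ Φ ((1 + 1) * x) ((1 + 1) * y))

theorem ghost_mul_ghost {U : Type*} [CommSemiring U]
    (he : (1 + 1 : U) * (1 + 1) = 1 + 1) (x : U) : (1 + 1) * ((1 + 1) * x) = (1 + 1) * x := by
  rw [← mul_assoc, he]

namespace EUAPhi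

variable {U : Type*} [CommSemiring U] {A : Set U} {Φ : U → U → Prop}

theorem equivalence (hΦsymm : ∀ a b : U, Φ a b → Φ b a)
    (hΦtrans : ∀ a b c : U, Φ a b → Φ b c → Φ a c) :
    Equivalence (EUAPhi A Φ) where
  refl _ := Or.inl rfl
  symm := by
    rintro x y (rfl | ⟨hx, hy, h⟩)
    · exact Or.inl rfl
    · exact Or.inr ⟨hy, hx, hΦsymm _ _ h⟩
  trans := by
    rintro x y z (rfl | ⟨hx, hy, hxy⟩) hyz
    · exact hyz
    · rcases hyz with rfl | ⟨-, hz, hyz⟩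
      · exact Or.inr ⟨hx, hy, hxy⟩
      · exact Or.inr ⟨hx, hz, hΦtrans _ _ _ hxy hyz⟩

theorem ghost_compatible (he : (1 + 1 : U) * (1 + 1) = 1 + 1)
    (hMA : ∀ x : U, (1 + 1) * x = x → x ∈ A) {x y : U} (h : EUAPhi A Φ x y) :
    EUAPhi A Φ ((1 + 1) * x) ((1 + 1) * y) := by
  rcases h with rfl | ⟨-, -, h⟩
  · exact Or.inl rfl
  · refine Or.inr ⟨hMA _ (ghost_mul_ghost he x), hMA _ (ghost_mul_ghost he y), ?_⟩
    rwa [ghost_mul_ghost he, ghost_mul_ghost he]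

theorem iff_of_ghost (hΦrefl : ∀ a : U, (1 + 1) * a = a → Φ a a)
    (hMA : ∀ x : U, (1 + 1) * x = x → x ∈ A) {a b : U}
    (ha : (1 + 1) * a = a) (hb : (1 + 1) * b = b) : EUAPhi A Φ a b ↔ Φ a b := by
  constructor
  · rintro (rfl | ⟨-, -, h⟩)
    · exact hΦrefl a ha
    · rwa [ha, hb] at h
  · intro h
    exact Or.inr ⟨hMA _ ha, hMA _ hb, by rwa [ha, hb]⟩

theorem setOf_rel_ghost_eq (he : (1 + 1 : U) * (1 + 1) = 1 + 1)
    (hΦrefl : ∀ a : U, (1 + 1) * a = a → Φ a a)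
    (hMA : ∀ x : U, (1 + 1) * x = x → x ∈ A) :
    {x : U | EUAPhi A Φ x ((1 + 1) * x)} = A := by
  ext x
  constructor
  · rintro (hx | ⟨hx, -, -⟩)
    · exact hMA _ hx.symm
    · exact hx
  · intro hx
    have hghost := ghost_mul_ghost he x
    exact Or.inr ⟨hx, hMA _ hghost, by rw [hghost]; exact hΦrefl _ hghost⟩

theorem le_of_equivalence {F : U → U → Prop} (hF : Equivalence F)
    (hΦF : ∀ a b : U, Φ a b → F a b) (hAF : ∀ x ∈ A, F x ((1 + 1) * x)) {x y : U}
    (h : EUAPhi A Φ x y) : F x y := by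
  rcases h with rfl | ⟨hx, hy, h⟩
  · exact hF.refl x
  · exact hF.trans (hAF x hx) (hF.trans (hΦF _ _ h) (hF.symm (hAF y hy)))

end EUAPhi

theorem EUAPhi_finest_ghost_compatible_general {U : Type*} [CommSemiring U]
    (hST1 : (1 + 1 : U) * (1 + 1) = 1 + 1)
    (Φ : U → U → Prop)
    (hΦrefl : ∀ a : U, (1 + 1) * a = a → Φ a a)
    (hΦsymm : ∀ a b : U, Φ a b → Φ b a)
    (hΦtrans : ∀ a b c : U, Φ a b → Φ b c → Φ a c)
    (A : Set U) (hMA : ∀ x : U, (1 + 1) * x = x → x ∈ A) :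
    Equivalence (EUAPhi A Φ) ∧
    -- E is ghost compatible
    (∀ x y : U, EUAPhi A Φ x y → EUAPhi A Φ ((1 + 1) * x) ((1 + 1) * y)) ∧
    -- E restricts to Φ on M
    (∀ a b : U, (1 + 1) * a = a → (1 + 1) * b = b →
      (EUAPhi A Φ a b ↔ Φ a b)) ∧
    -- (i) A(E) = 𝔄
    ({x : U | EUAPhi A Φ x ((1 + 1) * x)} = A) ∧
    -- (ii) E is the finest such relation
    (∀ F : U → U → Prop, Equivalence F →
      (∀ x y : U, F x y → F ((1 + 1) * x) ((1 + 1) * y)) →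
      (∀ a b : U, Φ a b → F a b) →
      (∀ x ∈ A, F x ((1 + 1) * x)) →
      ∀ x y : U, EUAPhi A Φ x y → F x y) :=
  ⟨EUAPhi.equivalence hΦsymm hΦtrans,
    fun _ _ ↦ EUAPhi.ghost_compatible hST1 hMA,
    fun _ _ ↦ EUAPhi.iff_of_ghost hΦrefl hMA,
    EUAPhi.setOf_rel_ghost_eq hST1 hΦrefl hMA,
    fun _ hF _ hΦF hAF _ _ ↦ EUAPhi.le_of_equivalence hF hΦF hAF⟩

/-- `E(U,𝔄,Φ)` is a ghost compatible equivalence relation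
restricting to `Φ` on the ghost ideal `M`, with `A(E) = 𝔄`, and it is the
finest ghost compatible equivalence relation `F` with `F|M ⊇ Φ` and
`A(F) ⊇ 𝔄`. -/
theorem EUAPhi_finest_ghost_compatible {U : Type*} [CommSemiring U]
    (hST1 : (1 + 1 : U) * (1 + 1) = 1 + 1)
    (hST2 : ∀ x y : U, (1 + 1) * x = (1 + 1) * y → x + y = (1 + 1) * x)
    (hST3 : ∀ x y : U, (1 + 1) * x ≠ (1 + 1) * y → x + y = x ∨ x + y = y)
    (Φ : U → U → Prop)
    (hΦM : ∀ a b : U, Φ a b → (1 + 1) * a = a ∧ (1 + 1) * b = b)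
    (hΦrefl : ∀ a : U, (1 + 1) * a = a → Φ a a)
    (hΦsymm : ∀ a b : U, Φ a b → Φ b a)
    (hΦtrans : ∀ a b c : U, Φ a b → Φ b c → Φ a c)
    (A : Set U) (hMA : ∀ x : U, (1 + 1) * x = x → x ∈ A) :
    Equivalence (EUAPhi A Φ) ∧
    -- E is ghost compatible
    (∀ x y : U, EUAPhi A Φ x y → EUAPhi A Φ ((1 + 1) * x) ((1 + 1) * y)) ∧
    -- E restricts to Φ on M
    (∀ a b : U, (1 + 1) * a = a → (1 + 1) * b = b →
      (EUAPhi A Φ a b ↔ Φ a b)) ∧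
    -- (i) A(E) = 𝔄
    ({x : U | EUAPhi A Φ x ((1 + 1) * x)} = A) ∧
    -- (ii) E is the finest such relation
    (∀ F : U → U → Prop, Equivalence F →
      (∀ x y : U, F x y → F ((1 + 1) * x) ((1 + 1) * y)) →
      (∀ a b : U, Φ a b → F a b) →
      (∀ x ∈ A, F x ((1 + 1) * x)) →
      ∀ x y : U, EUAPhi A Φ x y → F x y) :=
  EUAPhi_finest_ghost_compatible_general hST1 Φ hΦrefl hΦsymm hΦtrans A hMA
end

section
/- Let U be a supertropical semiring and f ∈ U with f*f = f. Define a relation E on U by: x ~E y iff x = y, or (x ∈ fU and y ∈ fU and e*x = e*y), where fU := {f*z : z ∈ U}. Then: (a) E is an equivalence relation on U which is multiplicative and fiber conserving (an MFCE-relation); (b) if e*f = e, then e ~E f, and E is finer than every multiplicative equivalence relation E' on U with e ~E' f, i.e., x ~E y implies x ~E' y. -/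
/-- The relation attached to an idempotent `f` of a supertropical semiring:
`x ~ y` iff `x = y`, or `x, y ∈ fU` and `e*x = e*y`. -/
def idemRel {U : Type*} [CommSemiring U] (f : U) (x y : U) : Prop :=
  x = y ∨ ((∃ z : U, x = f * z) ∧ (∃ z : U, y = f * z) ∧
    (1 + 1) * x = (1 + 1) * y)

namespace idemRel

variable {U : Type*} [CommSemiring U] {f x y : U}

theorem equivalence (f : U) : Equivalence (idemRel f) where
  refl _ := Or.inl rfl
  symm := by
    rintro x y (rfl | ⟨hx, hy, hxy⟩)
    · exact Or.inl rfl
    · exact Or.inr ⟨hy, hx, hxy.symm⟩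
  trans := by
    rintro x y z (rfl | ⟨hx, hy, hxy⟩) hyz
    · exact hyz
    · rcases hyz with rfl | ⟨-, hz, hyz⟩
      · exact Or.inr ⟨hx, hy, hxy⟩
      · exact Or.inr ⟨hx, hz, hxy.trans hyz⟩

theorem two_mul_eq (h : idemRel f x y) : (1 + 1) * x = (1 + 1) * y := by
  rcases h with rfl | ⟨-, -, hxy⟩
  · rfl
  · exact hxy

theorem mul_right (h : idemRel f x y) (z : U) : idemRel f (x * z) (y * z) := by
  rcases h with rfl | ⟨⟨a, rfl⟩, ⟨b, rfl⟩, hab⟩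
  · exact Or.inl rfl
  · refine Or.inr ⟨⟨a * z, mul_assoc f a z⟩, ⟨b * z, mul_assoc f b z⟩, ?_⟩
    rw [← mul_assoc, hab, mul_assoc]

theorem two_self (hST1 : (1 + 1 : U) * (1 + 1) = 1 + 1) (hef : (1 + 1 : U) * f = 1 + 1) :
    idemRel f (1 + 1) f :=
  Or.inr ⟨⟨1 + 1, by rw [mul_comm, hef]⟩, ⟨1, (mul_one f).symm⟩, by rw [hST1, hef]⟩

theorem le_of_rel_two_self {E : U → U → Prop} (hE : Equivalence E)
    (hmul : ∀ x y z : U, E x y → E (x * z) (y * z)) (h2f : E (1 + 1) f)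
    (hef : (1 + 1 : U) * f = 1 + 1) (h : idemRel f x y) : E x y := by
  rcases h with rfl | ⟨⟨a, rfl⟩, ⟨b, rfl⟩, hab⟩
  · exact hE.refl _
  · have hab : (1 + 1) * a = (1 + 1) * b := by
      rwa [← mul_assoc, ← mul_assoc, hef] at hab
    have ha : E ((1 + 1) * a) (f * a) := hmul _ _ a h2f
    have hb : E ((1 + 1) * b) (f * b) := hmul _ _ b h2f
    rw [hab] at ha
    exact hE.trans (hE.symm ha) hb

end idemRel

theorem idemRel_MFCE_and_finest_general {U : Type*} [CommSemiring U]
    (hST1 : (1 + 1 : U) * (1 + 1) = 1 + 1)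
    (f : U) :
    -- (a) an MFCE-relation
    (Equivalence (idemRel f) ∧
      (∀ x y z : U, idemRel f x y → idemRel f (x * z) (y * z)) ∧
      (∀ x y : U, idemRel f x y → (1 + 1) * x = (1 + 1) * y)) ∧
    -- (b)
    ((1 + 1 : U) * f = 1 + 1 →
      (idemRel f (1 + 1) f ∧
        (∀ E' : U → U → Prop, Equivalence E' →
          (∀ x y z : U, E' x y → E' (x * z) (y * z)) →
          E' (1 + 1) f →
          ∀ x y : U, idemRel f x y → E' x y))) :=
  ⟨⟨idemRel.equivalence f, fun _ _ z h => h.mul_right z, fun _ _ h => h.two_mul_eq⟩,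
    fun hef => ⟨idemRel.two_self hST1 hef,
      fun _ hE hmul h2f _ _ h => idemRel.le_of_rel_two_self hE hmul h2f hef h⟩⟩

/-- For an idempotent `f` of a supertropical semiring `U`, the
relation `idemRel f` is an MFCE-relation; and if `e*f = e` then `e ~ f` and
`idemRel f` is the finest multiplicative equivalence relation identifying `e`
and `f`. -/
theorem idemRel_MFCE_and_finest {U : Type*} [CommSemiring U]
    (hST1 : (1 + 1 : U) * (1 + 1) = 1 + 1)
    (hST2 : ∀ x y : U, (1 + 1) * x = (1 + 1) * y → x + y = (1 + 1) * x)
    (hST3 : ∀ x y : U, (1 + 1) * x ≠ (1 + 1) * y → x + y = x ∨ x + y = y)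
    (f : U) (hf : f * f = f) :
    -- (a) an MFCE-relation
    (Equivalence (idemRel f) ∧
      (∀ x y z : U, idemRel f x y → idemRel f (x * z) (y * z)) ∧
      (∀ x y : U, idemRel f x y → (1 + 1) * x = (1 + 1) * y)) ∧
    -- (b)
    ((1 + 1 : U) * f = 1 + 1 →
      (idemRel f (1 + 1) f ∧
        (∀ E' : U → U → Prop, Equivalence E' →
          (∀ x y z : U, E' x y → E' (x * z) (y * z)) →
          E' (1 + 1) f →
          ∀ x y : U, idemRel f x y → E' x y))) :=
  idemRel_MFCE_and_finest_general hST1 f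
end
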